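/- arXiv:1901.09397 — 7 statements merged into one kernel-verified Lean document; each statement's English description precedes it below -/
import Mathlib

section
/- There exists a constant C > 0 depending only on β, C_b, C_c, C_f, γ_b, γ_c, γ_f and C₀ (in particular independent of ε₁ and ε₂) such that ‖u'‖_{∞,I} ≤ C · max{ε₁⁻¹, ε₂⁻¹}. -/
/-!
In conservative form the equation says that the flux `ε₁ u' - ε₂ b u` has derivative
`c u - f - ε₂ b' u`, which is bounded independently of `ε₁, ε₂` because `u`, `b`, `b'`, `c`, `f`
are. Since `u` vanishes at both ends, Rolle's theorem gives a point `ξ` with `u' ξ = 0`; comparing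
the flux at `x` and at `ξ` bounds `ε₁ |u' x|` by a constant, i.e. `|u' x| ≤ C ε₁⁻¹`.
-/

open Set intervalIntegral

theorem hasDerivAt_flux {ε₁ ε₂ t : ℝ} {b b' c f u u' u'' : ℝ → ℝ}
    (hu : HasDerivAt u (u' t) t) (hu' : HasDerivAt u' (u'' t) t) (hb : HasDerivAt b (b' t) t)
    (heq : -ε₁ * u'' t + ε₂ * b t * u' t + c t * u t = f t) :
    HasDerivAt (fun s => ε₁ * u' s - ε₂ * b s * u s) (c t * u t - f t - ε₂ * b' t * u t) t :=
  ((hu'.const_mul ε₁).sub ((hb.const_mul ε₂).mul hu)).congr_deriv (by linear_combination -heq)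

theorem flux_sub_flux_eq_integral {ε₁ ε₂ x y : ℝ} {b b' c f u u' u'' : ℝ → ℝ}
    (hu : ∀ t ∈ uIcc x y, HasDerivAt u (u' t) t) (hu' : ∀ t ∈ uIcc x y, HasDerivAt u' (u'' t) t)
    (hb : ∀ t ∈ uIcc x y, HasDerivAt b (b' t) t) (hb' : ContinuousOn b' (uIcc x y))
    (hc : ContinuousOn c (uIcc x y)) (hf : ContinuousOn f (uIcc x y))
    (heq : ∀ t ∈ uIcc x y, -ε₁ * u'' t + ε₂ * b t * u' t + c t * u t = f t) :
    ε₁ * u' y - ε₂ * b y * u y - (ε₁ * u' x - ε₂ * b x * u x) =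
      ∫ t in x..y, (c t * u t - f t - ε₂ * b' t * u t) := by
  have hu_cont : ContinuousOn u (uIcc x y) := fun t ht => (hu t ht).continuousAt.continuousWithinAt
  refine (integral_eq_sub_of_hasDerivAt
    (fun t ht => hasDerivAt_flux (hu t ht) (hu' t ht) (hb t ht) (heq t ht)) ?_).symm
  exact (((hc.mul hu_cont).sub hf).sub
    ((continuousOn_const.mul hb').mul hu_cont)).intervalIntegrable

theorem abs_integral_le_of_mem_unitInterval {g : ℝ → ℝ} {M x y : ℝ}
    (hx : x ∈ Icc (0 : ℝ) 1) (hy : y ∈ Icc (0 : ℝ) 1) (hg : ∀ t ∈ uIcc x y, |g t| ≤ M) :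
    |∫ t in x..y, g t| ≤ M := by
  rw [← Real.norm_eq_abs]
  have hM : 0 ≤ M := (abs_nonneg _).trans (hg x left_mem_uIcc)
  have hyx : |y - x| ≤ 1 := abs_sub_le_iff.2 ⟨by linarith [hx.1, hy.2], by linarith [hx.2, hy.1]⟩
  calc ‖∫ t in x..y, g t‖ ≤ M * |y - x| :=
        norm_integral_le_of_norm_le_const fun t ht => hg t (uIoc_subset_uIcc ht)
    _ ≤ M * 1 := by gcongr
    _ = M := mul_one M

theorem abs_mul_deriv_le_of_flux_eq {ε₁ ε₂ B₀ B₁ K F M x ξ : ℝ} {b b' c f u u' : ℝ → ℝ}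
    (hε₂ : ε₂ ∈ Icc (0 : ℝ) 1) (hx : x ∈ Icc (0 : ℝ) 1) (hξ : ξ ∈ Icc (0 : ℝ) 1)
    (hb : ∀ t ∈ Icc (0 : ℝ) 1, |b t| ≤ B₀) (hb' : ∀ t ∈ Icc (0 : ℝ) 1, |b' t| ≤ B₁)
    (hc : ∀ t ∈ Icc (0 : ℝ) 1, |c t| ≤ K) (hf : ∀ t ∈ Icc (0 : ℝ) 1, |f t| ≤ F)
    (hu : ∀ t ∈ Icc (0 : ℝ) 1, |u t| ≤ M)
    (hflux : ε₁ * u' ξ - ε₂ * b ξ * u ξ - (ε₁ * u' x - ε₂ * b x * u x) =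
      ∫ t in x..ξ, (c t * u t - f t - ε₂ * b' t * u t))
    (hu'ξ : u' ξ = 0) :
    |ε₁ * u' x| ≤ (2 * B₀ + B₁ + K) * M + F := by
  have hbu : ∀ t ∈ Icc (0 : ℝ) 1, |b t * u t| ≤ B₀ * M := fun t ht => by
    rw [abs_mul]
    exact mul_le_mul (hb t ht) (hu t ht) (abs_nonneg _) ((abs_nonneg _).trans (hb t ht))
  have hintegrand : ∀ t ∈ uIcc x ξ, |c t * u t - f t - ε₂ * b' t * u t| ≤ K * M + F + B₁ * M := by
    intro t ht
    have ht' : t ∈ Icc (0 : ℝ) 1 := ordConnected_Icc.uIcc_subset hx hξ ht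
    have hcu : |c t| * |u t| ≤ K * M :=
      mul_le_mul (hc t ht') (hu t ht') (abs_nonneg _) ((abs_nonneg _).trans (hc t ht'))
    have hb'u : |ε₂| * (|b' t| * |u t|) ≤ 1 * (B₁ * M) := by
      rw [abs_of_nonneg hε₂.1]
      exact mul_le_mul hε₂.2 (mul_le_mul (hb' t ht') (hu t ht') (abs_nonneg _)
        ((abs_nonneg _).trans (hb' t ht'))) (by positivity) zero_le_one
    calc |c t * u t - f t - ε₂ * b' t * u t|
        ≤ |c t| * |u t| + |f t| + |ε₂| * (|b' t| * |u t|) := by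
          rw [← abs_mul, ← abs_mul, ← abs_mul, ← mul_assoc]
          exact (abs_sub _ _).trans (add_le_add_left (abs_sub _ _) _)
      _ ≤ K * M + F + 1 * (B₁ * M) := by gcongr; exact hf t ht'
      _ = K * M + F + B₁ * M := by ring
  have hint := abs_integral_le_of_mem_unitInterval hx hξ hintegrand
  have hε₁u' : ε₁ * u' x = ε₂ * (b x * u x - b ξ * u ξ) - ∫ t in x..ξ,
      (c t * u t - f t - ε₂ * b' t * u t) := by
    rw [hu'ξ] at hflux
    linarith
  calc |ε₁ * u' x| ≤ ε₂ * (|b x * u x| + |b ξ * u ξ|) + |∫ t in x..ξ,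
        (c t * u t - f t - ε₂ * b' t * u t)| := by
        rw [hε₁u']
        refine (abs_sub _ _).trans (add_le_add_left ?_ _)
        rw [abs_mul, abs_of_nonneg hε₂.1]
        exact mul_le_mul_of_nonneg_left (abs_sub _ _) hε₂.1
    _ ≤ 1 * (B₀ * M + B₀ * M) + (K * M + F + B₁ * M) := by
        gcongr
        · exact hε₂.2
        · exact hbu x hx
        · exact hbu ξ hξ
    _ = (2 * B₀ + B₁ + K) * M + F := by ring

theorem stmt_0_general (β C_b C_c C_f γ_b γ_c γ_f C₀ : ℝ)
    (hCb : 0 < C_b) (hCc : 0 < C_c) (hCf : 0 < C_f)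
    (hgb : 0 < γ_b) (hC₀ : 0 < C₀) :
    ∃ C : ℝ, 0 < C ∧
      ∀ ε₁ ε₂ : ℝ, ε₁ ∈ Set.Ioc (0:ℝ) 1 → ε₂ ∈ Set.Ioc (0:ℝ) 1 →
      ∀ b c f u u' u'' : ℝ → ℝ,
        AnalyticOnNhd ℝ b (Set.Icc 0 1) →
        AnalyticOnNhd ℝ c (Set.Icc 0 1) →
        AnalyticOnNhd ℝ f (Set.Icc 0 1) →
        (∀ n : ℕ, ∀ x ∈ Set.Icc (0:ℝ) 1, |iteratedDeriv n b x| ≤ C_b * n.factorial * γ_b ^ n) →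
        (∀ n : ℕ, ∀ x ∈ Set.Icc (0:ℝ) 1, |iteratedDeriv n c x| ≤ C_c * n.factorial * γ_c ^ n) →
        (∀ n : ℕ, ∀ x ∈ Set.Icc (0:ℝ) 1, |iteratedDeriv n f x| ≤ C_f * n.factorial * γ_f ^ n) →
        (∀ x ∈ Set.Icc (0:ℝ) 1, β ≤ b x) →
        (∃ γ : ℝ, 0 < γ ∧ ∀ x ∈ Set.Icc (0:ℝ) 1, γ ≤ c x) →
        (∃ ρ : ℝ, 0 < ρ ∧ ∀ x ∈ Set.Icc (0:ℝ) 1, ρ ≤ c x - ε₂ / 2 * deriv b x) →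
        (∀ x ∈ Set.Icc (0:ℝ) 1, HasDerivWithinAt u (u' x) (Set.Icc 0 1) x) →
        (∀ x ∈ Set.Icc (0:ℝ) 1, HasDerivWithinAt u' (u'' x) (Set.Icc 0 1) x) →
        ContinuousOn u'' (Set.Icc 0 1) →
        (∀ x ∈ Set.Ioo (0:ℝ) 1, -ε₁ * u'' x + ε₂ * b x * u' x + c x * u x = f x) →
        u 0 = 0 → u 1 = 0 →
        (∀ x ∈ Set.Icc (0:ℝ) 1, |u x| ≤ C₀) →
        ∀ x ∈ Set.Ioo (0:ℝ) 1, |u' x| ≤ C * max ε₁⁻¹ ε₂⁻¹ := by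
  refine ⟨(2 * C_b + C_b * γ_b + C_c) * C₀ + C_f, by positivity, ?_⟩
  intro ε₁ ε₂ hε₁ hε₂ b c f u u' u'' hb hc hf hbB hcB hfB _ _ _ hu hu' _ heq hu0 hu1 huB x hx
  have hasDerivAt_of_mem_Ioo {g g' : ℝ → ℝ}
      (hg : ∀ y ∈ Icc (0 : ℝ) 1, HasDerivWithinAt g (g' y) (Icc 0 1) y) {y : ℝ}
      (hy : y ∈ Ioo (0 : ℝ) 1) : HasDerivAt g (g' y) y :=
    (hg y (Ioo_subset_Icc_self hy)).hasDerivAt (Icc_mem_nhds hy.1 hy.2)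
  obtain ⟨ξ, hξ, hu'ξ⟩ := exists_hasDerivAt_eq_zero zero_lt_one
    (fun y hy => (hu y hy).continuousWithinAt) (hu0.trans hu1.symm)
    fun y hy => hasDerivAt_of_mem_Ioo hu hy
  have hJ : uIcc x ξ ⊆ Ioo 0 1 := ordConnected_Ioo.uIcc_subset hx hξ
  have hJ' : uIcc x ξ ⊆ Icc 0 1 := hJ.trans Ioo_subset_Icc_self
  have hflux := flux_sub_flux_eq_integral (fun t ht => hasDerivAt_of_mem_Ioo hu (hJ ht))
    (fun t ht => hasDerivAt_of_mem_Ioo hu' (hJ ht))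
    (fun t ht => (hb t (hJ' ht)).differentiableAt.hasDerivAt)
    (hb.deriv.continuousOn.mono hJ') (hc.continuousOn.mono hJ') (hf.continuousOn.mono hJ')
    fun t ht => heq t (hJ ht)
  have hbound := abs_mul_deriv_le_of_flux_eq (Ioc_subset_Icc_self hε₂) (Ioo_subset_Icc_self hx)
    (Ioo_subset_Icc_self hξ) (fun t ht => by simpa using hbB 0 t ht)
    (fun t ht => by simpa using hbB 1 t ht) (fun t ht => by simpa using hcB 0 t ht)
    (fun t ht => by simpa using hfB 0 t ht) huB hflux hu'ξ
  rw [abs_mul, abs_of_pos hε₁.1, ← le_div_iff₀' hε₁.1, div_eq_mul_inv] at hbound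
  exact hbound.trans (mul_le_mul_of_nonneg_left (le_max_left _ _) (by positivity))

theorem stmt_0 (β C_b C_c C_f γ_b γ_c γ_f C₀ : ℝ)
    (hβ : 0 < β) (hCb : 0 < C_b) (hCc : 0 < C_c) (hCf : 0 < C_f)
    (hgb : 0 < γ_b) (hgc : 0 < γ_c) (hgf : 0 < γ_f) (hC₀ : 0 < C₀) :
    ∃ C : ℝ, 0 < C ∧
      ∀ ε₁ ε₂ : ℝ, ε₁ ∈ Set.Ioc (0:ℝ) 1 → ε₂ ∈ Set.Ioc (0:ℝ) 1 →
      ∀ b c f u u' u'' : ℝ → ℝ,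
        AnalyticOnNhd ℝ b (Set.Icc 0 1) →
        AnalyticOnNhd ℝ c (Set.Icc 0 1) →
        AnalyticOnNhd ℝ f (Set.Icc 0 1) →
        (∀ n : ℕ, ∀ x ∈ Set.Icc (0:ℝ) 1, |iteratedDeriv n b x| ≤ C_b * n.factorial * γ_b ^ n) →
        (∀ n : ℕ, ∀ x ∈ Set.Icc (0:ℝ) 1, |iteratedDeriv n c x| ≤ C_c * n.factorial * γ_c ^ n) →
        (∀ n : ℕ, ∀ x ∈ Set.Icc (0:ℝ) 1, |iteratedDeriv n f x| ≤ C_f * n.factorial * γ_f ^ n) →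
        (∀ x ∈ Set.Icc (0:ℝ) 1, β ≤ b x) →
        (∃ γ : ℝ, 0 < γ ∧ ∀ x ∈ Set.Icc (0:ℝ) 1, γ ≤ c x) →
        (∃ ρ : ℝ, 0 < ρ ∧ ∀ x ∈ Set.Icc (0:ℝ) 1, ρ ≤ c x - ε₂ / 2 * deriv b x) →
        (∀ x ∈ Set.Icc (0:ℝ) 1, HasDerivWithinAt u (u' x) (Set.Icc 0 1) x) →
        (∀ x ∈ Set.Icc (0:ℝ) 1, HasDerivWithinAt u' (u'' x) (Set.Icc 0 1) x) →
        ContinuousOn u'' (Set.Icc 0 1) →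
        (∀ x ∈ Set.Ioo (0:ℝ) 1, -ε₁ * u'' x + ε₂ * b x * u' x + c x * u x = f x) →
        u 0 = 0 → u 1 = 0 →
        (∀ x ∈ Set.Icc (0:ℝ) 1, |u x| ≤ C₀) →
        ∀ x ∈ Set.Ioo (0:ℝ) 1, |u' x| ≤ C * max ε₁⁻¹ ε₂⁻¹ :=
  stmt_0_general β C_b C_c C_f γ_b γ_c γ_f C₀ hCb hCc hCf hgb hC₀
end

section
/- There exists a constant C > 0 depending only on β, C_b, C_c, C_f, γ_b, γ_c, γ_f and C₀ (in particular independent of ε₁ and ε₂) such that |u'(1)| ≤ C · (ε₁⁻¹ + ε₂⁻¹). -/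
/-!
Writing the equation in conservation form, the flux `w = ε₁ u' - ε₂ b u` satisfies
`w' = c u - f - ε₂ b' u`, which is bounded independently of `ε₁, ε₂`. By Rolle's theorem `u'`
vanishes at some `ξ ∈ (0, 1)`, where `|w ξ| = ε₂ |b ξ u ξ|` is bounded too, and since `u 1 = 0`
the mean value inequality bounds `w 1 = ε₁ u' 1`. Hence `|u' 1| = O(ε₁⁻¹)`.
-/

open Set

theorem abs_mul_sub_sub_mul_le {c u f d ε C_c C_u C_f C_d : ℝ} (hε : |ε| ≤ 1) (hc : |c| ≤ C_c)
    (hu : |u| ≤ C_u) (hf : |f| ≤ C_f) (hd : |d| ≤ C_d) :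
    |c * u - f - ε * (d * u)| ≤ C_c * C_u + C_f + C_d * C_u := by
  have hCc : 0 ≤ C_c := (abs_nonneg c).trans hc
  have hCd : 0 ≤ C_d := (abs_nonneg d).trans hd
  calc |c * u - f - ε * (d * u)| ≤ |c| * |u| + |f| + |ε| * (|d| * |u|) := by
        rw [← abs_mul, ← abs_mul, ← abs_mul]
        exact (abs_sub _ _).trans (by gcongr; exact abs_sub _ _)
    _ ≤ C_c * C_u + C_f + 1 * (C_d * C_u) := by gcongr
    _ = C_c * C_u + C_f + C_d * C_u := by rw [one_mul]

section ConvectionDiffusion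

variable {ε₁ ε₂ x₀ x₁ M N : ℝ} {b c f u u' u'' : ℝ → ℝ}

theorem abs_mul_deriv_right_le_of_ode (hx : x₀ < x₁)
    (hu : ∀ x ∈ Icc x₀ x₁, HasDerivWithinAt u (u' x) (Icc x₀ x₁) x)
    (hu' : ∀ x ∈ Icc x₀ x₁, HasDerivWithinAt u' (u'' x) (Icc x₀ x₁) x)
    (hb : ∀ x ∈ Icc x₀ x₁, DifferentiableAt ℝ b x)
    (hode : ∀ x ∈ Ioo x₀ x₁, -ε₁ * u'' x + ε₂ * b x * u' x + c x * u x = f x)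
    (hu₀ : u x₀ = 0) (hu₁ : u x₁ = 0)
    (hM : ∀ x ∈ Ioo x₀ x₁, |c x * u x - f x - ε₂ * (deriv b x * u x)| ≤ M)
    (hN : ∀ x ∈ Ioo x₀ x₁, |ε₂ * (b x * u x)| ≤ N) :
    |ε₁ * u' x₁| ≤ M * (x₁ - x₀) + N := by
  obtain ⟨ξ, hξ, hu'ξ⟩ : ∃ ξ ∈ Ioo x₀ x₁, u' ξ = 0 :=
    exists_hasDerivAt_eq_zero hx (fun x hx => (hu x hx).continuousWithinAt) (hu₀.trans hu₁.symm)
      fun x hx => (hu x (Ioo_subset_Icc_self hx)).hasDerivAt (Icc_mem_nhds hx.1 hx.2)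
  set w : ℝ → ℝ := fun x => ε₁ * u' x - ε₂ * (b x * u x)
  have hsub : Icc ξ x₁ ⊆ Icc x₀ x₁ := Icc_subset_Icc_left hξ.1.le
  have hw : ∀ x ∈ Icc ξ x₁, HasDerivWithinAt w
      (ε₁ * u'' x - ε₂ * (deriv b x * u x + b x * u' x)) (Icc ξ x₁) x := fun x hx =>
    (((hu' x (hsub hx)).const_mul ε₁).sub
      (((hb x (hsub hx)).hasDerivAt.hasDerivWithinAt.mul (hu x (hsub hx))).const_mul ε₂)).mono hsub
  have hw' : ∀ x ∈ Ico ξ x₁, ‖ε₁ * u'' x - ε₂ * (deriv b x * u x + b x * u' x)‖ ≤ M := by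
    intro x hx
    have hxI : x ∈ Ioo x₀ x₁ := ⟨hξ.1.trans_le hx.1, hx.2⟩
    have := hode x hxI
    rw [Real.norm_eq_abs,
      show ε₁ * u'' x - ε₂ * (deriv b x * u x + b x * u' x)
        = c x * u x - f x - ε₂ * (deriv b x * u x) by linarith]
    exact hM x hxI
  have hmvt : |w x₁ - w ξ| ≤ M * (x₁ - ξ) :=
    norm_image_sub_le_of_norm_deriv_le_segment' hw hw' x₁ (right_mem_Icc.2 hξ.2.le)
  have hw₁ : w x₁ = ε₁ * u' x₁ := by simp [w, hu₁]
  have hwξ : |w ξ| ≤ N := by simpa [w, hu'ξ] using hN ξ hξ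
  have hM₀ : 0 ≤ M := (abs_nonneg _).trans (hM ξ hξ)
  calc |ε₁ * u' x₁| = |(w x₁ - w ξ) + w ξ| := by rw [sub_add_cancel, hw₁]
    _ ≤ M * (x₁ - ξ) + N := (abs_add_le _ _).trans (add_le_add hmvt hwξ)
    _ ≤ M * (x₁ - x₀) + N := by gcongr; exact hξ.1.le

end ConvectionDiffusion

theorem stmt_1_general (β C_b C_c C_f γ_b γ_c γ_f C₀ : ℝ)
    (hCb : 0 < C_b) (hCc : 0 < C_c) (hCf : 0 < C_f)
    (hgb : 0 < γ_b) (hC₀ : 0 < C₀) :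
    ∃ C : ℝ, 0 < C ∧
      ∀ ε₁ ε₂ : ℝ, ε₁ ∈ Set.Ioc (0:ℝ) 1 → ε₂ ∈ Set.Ioc (0:ℝ) 1 →
      ∀ b c f u u' u'' : ℝ → ℝ,
        AnalyticOnNhd ℝ b (Set.Icc 0 1) →
        AnalyticOnNhd ℝ c (Set.Icc 0 1) →
        AnalyticOnNhd ℝ f (Set.Icc 0 1) →
        (∀ n : ℕ, ∀ x ∈ Set.Icc (0:ℝ) 1, |iteratedDeriv n b x| ≤ C_b * n.factorial * γ_b ^ n) →
        (∀ n : ℕ, ∀ x ∈ Set.Icc (0:ℝ) 1, |iteratedDeriv n c x| ≤ C_c * n.factorial * γ_c ^ n) →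
        (∀ n : ℕ, ∀ x ∈ Set.Icc (0:ℝ) 1, |iteratedDeriv n f x| ≤ C_f * n.factorial * γ_f ^ n) →
        (∀ x ∈ Set.Icc (0:ℝ) 1, β ≤ b x) →
        (∃ γ : ℝ, 0 < γ ∧ ∀ x ∈ Set.Icc (0:ℝ) 1, γ ≤ c x) →
        (∃ ρ : ℝ, 0 < ρ ∧ ∀ x ∈ Set.Icc (0:ℝ) 1, ρ ≤ c x - ε₂ / 2 * deriv b x) →
        (∀ x ∈ Set.Icc (0:ℝ) 1, HasDerivWithinAt u (u' x) (Set.Icc 0 1) x) →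
        (∀ x ∈ Set.Icc (0:ℝ) 1, HasDerivWithinAt u' (u'' x) (Set.Icc 0 1) x) →
        ContinuousOn u'' (Set.Icc 0 1) →
        (∀ x ∈ Set.Ioo (0:ℝ) 1, -ε₁ * u'' x + ε₂ * b x * u' x + c x * u x = f x) →
        u 0 = 0 → u 1 = 0 →
        (∀ x ∈ Set.Icc (0:ℝ) 1, |u x| ≤ C₀) →
        |u' 1| ≤ C * (ε₁⁻¹ + ε₂⁻¹) := by
  refine ⟨C_c * C₀ + C_f + C_b * γ_b * C₀ + C_b * C₀, by positivity, ?_⟩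
  rintro ε₁ ε₂ ⟨hε₁, -⟩ ⟨hε₂, hε₂1⟩ b c f u u' u'' hb - - hbD hcD hfD - - - hu hu' - hode hu₀ hu₁
    huC
  have hε₂abs : |ε₂| ≤ 1 := by rwa [abs_of_pos hε₂]
  have hI : Ioo (0:ℝ) 1 ⊆ Icc 0 1 := Ioo_subset_Icc_self
  have hb₀ : ∀ x ∈ Ioo (0:ℝ) 1, |b x| ≤ C_b := fun x hx => by simpa using hbD 0 x (hI hx)
  have hb₁ : ∀ x ∈ Ioo (0:ℝ) 1, |deriv b x| ≤ C_b * γ_b := fun x hx => by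
    simpa using hbD 1 x (hI hx)
  have hc₀ : ∀ x ∈ Ioo (0:ℝ) 1, |c x| ≤ C_c := fun x hx => by simpa using hcD 0 x (hI hx)
  have hf₀ : ∀ x ∈ Ioo (0:ℝ) 1, |f x| ≤ C_f := fun x hx => by simpa using hfD 0 x (hI hx)
  have hflux := abs_mul_deriv_right_le_of_ode zero_lt_one hu hu'
    (fun x hx => (hb x hx).differentiableAt) hode hu₀ hu₁
    (fun x hx => abs_mul_sub_sub_mul_le hε₂abs (hc₀ x hx) (huC x (hI hx)) (hf₀ x hx) (hb₁ x hx))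
    (fun x hx => by
      rw [abs_mul, abs_mul]
      exact (mul_le_of_le_one_left (by positivity) hε₂abs).trans
        (mul_le_mul (hb₀ x hx) (huC x (hI hx)) (abs_nonneg _) hCb.le))
  rw [sub_zero, mul_one, abs_mul, abs_of_pos hε₁, mul_comm, ← le_div_iff₀ hε₁] at hflux
  calc |u' 1| ≤ (C_c * C₀ + C_f + C_b * γ_b * C₀ + C_b * C₀) / ε₁ := hflux
    _ ≤ (C_c * C₀ + C_f + C_b * γ_b * C₀ + C_b * C₀) * (ε₁⁻¹ + ε₂⁻¹) := by
      rw [div_eq_mul_inv]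
      gcongr
      exact le_add_of_nonneg_right (inv_pos.2 hε₂).le

theorem stmt_1 (β C_b C_c C_f γ_b γ_c γ_f C₀ : ℝ)
    (hβ : 0 < β) (hCb : 0 < C_b) (hCc : 0 < C_c) (hCf : 0 < C_f)
    (hgb : 0 < γ_b) (hgc : 0 < γ_c) (hgf : 0 < γ_f) (hC₀ : 0 < C₀) :
    ∃ C : ℝ, 0 < C ∧
      ∀ ε₁ ε₂ : ℝ, ε₁ ∈ Set.Ioc (0:ℝ) 1 → ε₂ ∈ Set.Ioc (0:ℝ) 1 →
      ∀ b c f u u' u'' : ℝ → ℝ,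
        AnalyticOnNhd ℝ b (Set.Icc 0 1) →
        AnalyticOnNhd ℝ c (Set.Icc 0 1) →
        AnalyticOnNhd ℝ f (Set.Icc 0 1) →
        (∀ n : ℕ, ∀ x ∈ Set.Icc (0:ℝ) 1, |iteratedDeriv n b x| ≤ C_b * n.factorial * γ_b ^ n) →
        (∀ n : ℕ, ∀ x ∈ Set.Icc (0:ℝ) 1, |iteratedDeriv n c x| ≤ C_c * n.factorial * γ_c ^ n) →
        (∀ n : ℕ, ∀ x ∈ Set.Icc (0:ℝ) 1, |iteratedDeriv n f x| ≤ C_f * n.factorial * γ_f ^ n) →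
        (∀ x ∈ Set.Icc (0:ℝ) 1, β ≤ b x) →
        (∃ γ : ℝ, 0 < γ ∧ ∀ x ∈ Set.Icc (0:ℝ) 1, γ ≤ c x) →
        (∃ ρ : ℝ, 0 < ρ ∧ ∀ x ∈ Set.Icc (0:ℝ) 1, ρ ≤ c x - ε₂ / 2 * deriv b x) →
        (∀ x ∈ Set.Icc (0:ℝ) 1, HasDerivWithinAt u (u' x) (Set.Icc 0 1) x) →
        (∀ x ∈ Set.Icc (0:ℝ) 1, HasDerivWithinAt u' (u'' x) (Set.Icc 0 1) x) →
        ContinuousOn u'' (Set.Icc 0 1) →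
        (∀ x ∈ Set.Ioo (0:ℝ) 1, -ε₁ * u'' x + ε₂ * b x * u' x + c x * u x = f x) →
        u 0 = 0 → u 1 = 0 →
        (∀ x ∈ Set.Icc (0:ℝ) 1, |u x| ≤ C₀) →
        |u' 1| ≤ C * (ε₁⁻¹ + ε₂⁻¹) :=
  stmt_1_general β C_b C_c C_f γ_b γ_c γ_f C₀ hCb hCc hCf hgb hC₀
end

section
/- There exists a constant C > 0 depending only on β (in particular independent of ε₁ and ε₂) such that (1/ε₁) ∫₀¹ ∫ₓ¹ e^{A(t) − A(x)} dt dx ≤ C · (1/ε₂ + ε₁/ε₂²). -/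
/-!
Since `b ≥ β`, for `x ≤ t` we have `A(t) - A(x) = -(ε₂/ε₁) ∫ₓᵗ b ≤ -(ε₂β/ε₁)(t - x)`, so the inner
integral is at most `∫₀^∞ e^{-(ε₂β/ε₁)u} du = ε₁/(ε₂β)`. Hence the left side is at most
`1/(βε₂)`, and `C = 1/β` works.
-/

open Real Set intervalIntegral MeasureTheory

lemma integral_exp_neg_mul_sub {k : ℝ} (hk : k ≠ 0) (x y : ℝ) :
    ∫ t in x..y, exp (-(k * (t - x))) = (1 - exp (-(k * (y - x)))) / k := by
  have hderiv (t : ℝ) :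
      HasDerivAt (fun t => -exp (-(k * (t - x))) / k) (exp (-(k * (t - x)))) t :=
    ((((hasDerivAt_id' t).sub_const x).const_mul k).neg.exp.neg.div_const k).congr_deriv
      (by field_simp; rfl)
  rw [integral_eq_sub_of_hasDerivAt (fun t _ => hderiv t)
    (Continuous.intervalIntegrable (by fun_prop) _ _)]
  simp only [sub_self, mul_zero, neg_zero, exp_zero]
  ring

lemma integral_exp_le_inv_of_le_neg_mul {f : ℝ → ℝ} {k x y : ℝ} (hk : 0 < k) (hxy : x ≤ y)
    (hf : ∀ t ∈ Ioc x y, f t ≤ -(k * (t - x))) :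
    ∫ t in x..y, exp (f t) ≤ 1 / k :=
  calc ∫ t in x..y, exp (f t)
      ≤ ‖∫ t in x..y, exp (f t)‖ := le_norm_self _
    _ ≤ ∫ t in x..y, exp (-(k * (t - x))) :=
        norm_integral_le_of_norm_le hxy
          (ae_of_all _ fun t ht => by
            rw [norm_of_nonneg (exp_pos _).le]
            exact exp_le_exp.2 (hf t ht))
          (Continuous.intervalIntegrable (by fun_prop) _ _)
    _ = (1 - exp (-(k * (y - x)))) / k := integral_exp_neg_mul_sub hk.ne' x y
    _ ≤ 1 / k := div_le_div_of_nonneg_right (sub_le_self _ (exp_pos _).le) hk.le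

lemma mul_sub_le_integral_of_le {b : ℝ → ℝ} {β x t : ℝ} (hxt : x ≤ t)
    (hb : IntervalIntegrable b volume x t) (hbβ : ∀ s ∈ Icc x t, β ≤ b s) :
    β * (t - x) ≤ ∫ s in x..t, b s := by
  have := integral_mono_on hxt intervalIntegrable_const hb hbβ
  rwa [intervalIntegral.integral_const, smul_eq_mul, mul_comm] at this

section

variable {b : ℝ → ℝ} {β c a d : ℝ}

lemma integral_exp_mul_integral_sub_le (hβ : 0 < β) (hc : 0 < c)
    (hb : ContinuousOn b (Icc a d)) (hbβ : ∀ s ∈ Icc a d, β ≤ b s) {x : ℝ} (hx : x ∈ Icc a d) :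
    ∫ t in x..d, exp ((c * ∫ s in t..d, b s) - c * ∫ s in x..d, b s) ≤ 1 / (c * β) := by
  have hint {u v : ℝ} (hu : u ∈ Icc a d) (hv : v ∈ Icc a d) : IntervalIntegrable b volume u v :=
    (hb.mono (uIcc_subset_Icc hu hv)).intervalIntegrable
  refine integral_exp_le_inv_of_le_neg_mul (by positivity) hx.2 fun t ⟨hxt, htd⟩ => ?_
  have ht : t ∈ Icc a d := ⟨hx.1.trans hxt.le, htd⟩
  have hd : d ∈ Icc a d := ⟨hx.1.trans hx.2, le_rfl⟩
  have hsplit := integral_add_adjacent_intervals (hint hx ht) (hint ht hd)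
  have hlow := mul_sub_le_integral_of_le hxt.le (hint hx ht)
    fun s hs => hbβ s ⟨hx.1.trans hs.1, hs.2.trans htd⟩
  rw [← hsplit]
  linarith [mul_le_mul_of_nonneg_left hlow hc.le]

lemma integral_integral_exp_mul_integral_sub_le (hβ : 0 < β) (hc : 0 < c) (had : a ≤ d)
    (hb : ContinuousOn b (Icc a d)) (hbβ : ∀ s ∈ Icc a d, β ≤ b s) :
    ∫ x in a..d, ∫ t in x..d, exp ((c * ∫ s in t..d, b s) - c * ∫ s in x..d, b s)
      ≤ 1 / (c * β) * (d - a) := by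
  refine (le_norm_self _).trans ?_
  rw [← abs_of_nonneg (sub_nonneg.2 had)]
  refine norm_integral_le_of_norm_le_const fun x hx => ?_
  rw [uIoc_of_le had] at hx
  have hx' : x ∈ Icc a d := Ioc_subset_Icc_self hx
  rw [norm_of_nonneg (integral_nonneg hx'.2 fun t _ => (exp_pos _).le)]
  exact integral_exp_mul_integral_sub_le hβ hc hb hbβ hx'

end

theorem stmt_3 (β : ℝ) (hβ : 0 < β) :
    ∃ C : ℝ, 0 < C ∧
      ∀ ε₁ ε₂ : ℝ, ε₁ ∈ Set.Ioc (0:ℝ) 1 → ε₂ ∈ Set.Ioc (0:ℝ) 1 →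
      ∀ b : ℝ → ℝ, ContinuousOn b (Set.Icc 0 1) → (∀ x ∈ Set.Icc (0:ℝ) 1, β ≤ b x) →
        (1 / ε₁) * ∫ x in (0:ℝ)..1, ∫ t in x..1,
            Real.exp ((ε₂ / ε₁ * ∫ s in t..1, b s) - ε₂ / ε₁ * ∫ s in x..1, b s)
          ≤ C * (1 / ε₂ + ε₁ / ε₂ ^ 2) := by
  refine ⟨1 / β, by positivity, ?_⟩
  rintro ε₁ ε₂ ⟨hε₁, -⟩ ⟨hε₂, -⟩ b hb hbβ
  have hc : 0 < ε₂ / ε₁ := div_pos hε₂ hε₁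
  calc (1 / ε₁) * ∫ x in (0:ℝ)..1, ∫ t in x..1,
        exp ((ε₂ / ε₁ * ∫ s in t..1, b s) - ε₂ / ε₁ * ∫ s in x..1, b s)
      ≤ (1 / ε₁) * (1 / (ε₂ / ε₁ * β) * (1 - 0)) := by
        gcongr
        exact integral_integral_exp_mul_integral_sub_le hβ hc zero_le_one hb hbβ
    _ = 1 / β * (1 / ε₂) := by field_simp; ring
    _ ≤ 1 / β * (1 / ε₂ + ε₁ / ε₂ ^ 2) := by
        gcongr
        exact le_add_of_nonneg_right (by positivity)
end

section
/- There exist positive constants C and K, independent of ε₁ and ε₂, such that for every n = 0, 1, 2, ... the solution u satisfies ‖u⁽ⁿ⁾‖_{∞,I} ≤ C K^n (max{n, ε₁⁻¹, ε₂⁻¹})^n. -/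
open Set Filter Topology

namespace Stmt4Aux

lemma itDW_open {f : ℝ → ℝ} {n : ℕ} {x : ℝ} (hx : x ∈ Set.Ioo (0:ℝ) 1) :
    iteratedDerivWithin n f (Set.Ioo 0 1) x = iteratedDeriv n f x := by
  rw [iteratedDerivWithin_eq_iteratedFDerivWithin, iteratedDeriv_eq_iteratedFDeriv,
    iteratedFDerivWithin_of_isOpen n isOpen_Ioo hx]

lemma itDW_Icc_Ioo {f : ℝ → ℝ} {n : ℕ} {x : ℝ} (hx : x ∈ Set.Ioo (0:ℝ) 1) :
    iteratedDerivWithin n f (Set.Icc 0 1) x = iteratedDerivWithin n f (Set.Ioo 0 1) x := by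
  have h := iteratedFDerivWithin_inter_open (𝕜 := ℝ) (f := f) (n := n) (x := x)
    (s := Set.Icc (0:ℝ) 1) (u := Set.Ioo (0:ℝ) 1) isOpen_Ioo hx
  rw [Set.inter_eq_self_of_subset_right Set.Ioo_subset_Icc_self] at h
  rw [iteratedDerivWithin_eq_iteratedFDerivWithin, iteratedDerivWithin_eq_iteratedFDerivWithin, h]

lemma closure_bound {h : ℝ → ℝ} (hc : ContinuousOn h (Set.Icc 0 1)) {M : ℝ}
    (hb : ∀ x ∈ Set.Ioo (0:ℝ) 1, |h x| ≤ M) : ∀ x ∈ Set.Icc (0:ℝ) 1, |h x| ≤ M := by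
  intro x hx
  have hxc : x ∈ closure (Set.Ioo (0:ℝ) 1) := by
    rw [closure_Ioo (by norm_num : (0:ℝ) ≠ 1)]; exact hx
  have hne : (𝓝[Set.Ioo (0:ℝ) 1] x).NeBot := mem_closure_iff_nhdsWithin_neBot.mp hxc
  have ht : Filter.Tendsto h (𝓝[Set.Ioo (0:ℝ) 1] x) (𝓝 (h x)) :=
    (hc x hx).mono Set.Ioo_subset_Icc_self
  exact le_of_tendsto ht.abs (Filter.eventually_of_mem self_mem_nhdsWithin fun y hy => hb y hy)

lemma geom_le_two {r : ℝ} (h0 : 0 ≤ r) (h1 : r ≤ 1/2) (N : ℕ) :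
    ∑ i ∈ Finset.range N, r ^ i ≤ 2 := by
  have h3 : ∑ i ∈ Finset.range N, (1/2:ℝ)^i = 2 - 2*(1/2)^N := by
    induction N with
    | zero => simp
    | succ n ih => rw [Finset.sum_range_succ, ih]; ring
  have h2 : ∑ i ∈ Finset.range N, r ^ i ≤ ∑ i ∈ Finset.range N, (1/2:ℝ)^i :=
    Finset.sum_le_sum (fun i _ => pow_le_pow_left₀ h0 h1 i)
  have h4 : (0:ℝ) ≤ (1/2:ℝ)^N := by positivity
  linarith

lemma chooseFact (m i : ℕ) : ((m.choose i : ℝ)) * (i.factorial : ℝ) ≤ (m:ℝ)^i := by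
  have h1 : m.choose i * i.factorial ≤ m ^ i := by
    rw [show m.choose i * i.factorial = i.factorial * m.choose i from by ring,
      ← Nat.descFactorial_eq_factorial_mul_choose]
    exact Nat.descFactorial_le_pow m i
  calc ((m.choose i : ℝ)) * (i.factorial : ℝ) = ((m.choose i * i.factorial : ℕ) : ℝ) := by
        push_cast; ring
    _ ≤ ((m ^ i : ℕ) : ℝ) := Nat.cast_le.mpr h1
    _ = (m:ℝ)^i := by push_cast; ring

lemma factPow (m : ℕ) : ((m.factorial : ℕ) : ℝ) ≤ (m:ℝ)^m := by
  calc ((m.factorial : ℕ) : ℝ) ≤ ((m^m : ℕ) : ℝ) := Nat.cast_le.mpr (Nat.factorial_le_pow m)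
    _ = (m:ℝ)^m := by push_cast; ring

lemma Kpow {K : ℝ} (hK : K ≠ 0) {N i : ℕ} (h : i ≤ N) : K^(N-i) = K^N * (K⁻¹)^i := by
  rw [pow_sub₀ K hK h, inv_pow]

lemma rec_bound (b c f u : ℝ → ℝ) (C_b C_c C_f γ_b γ_c γ_f ε₁ ε₂ : ℝ) (M : ℕ → ℝ)
    (hε₁ : 0 < ε₁) (hε₂ : 0 < ε₂)
    (hban : AnalyticOnNhd ℝ b (Set.Icc 0 1))
    (hcan : AnalyticOnNhd ℝ c (Set.Icc 0 1))
    (hfan : AnalyticOnNhd ℝ f (Set.Icc 0 1))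
    (hbb : ∀ n : ℕ, ∀ x ∈ Set.Icc (0:ℝ) 1, |iteratedDeriv n b x| ≤ C_b * n.factorial * γ_b ^ n)
    (hcb : ∀ n : ℕ, ∀ x ∈ Set.Icc (0:ℝ) 1, |iteratedDeriv n c x| ≤ C_c * n.factorial * γ_c ^ n)
    (hfb : ∀ n : ℕ, ∀ x ∈ Set.Icc (0:ℝ) 1, |iteratedDeriv n f x| ≤ C_f * n.factorial * γ_f ^ n)
    (hu : ContDiffOn ℝ (⊤ : ℕ∞) u (Set.Icc 0 1))
    (hode : ∀ x ∈ Set.Ioo (0:ℝ) 1,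
      -ε₁ * iteratedDerivWithin 2 u (Set.Icc 0 1) x
        + ε₂ * b x * derivWithin u (Set.Icc 0 1) x + c x * u x = f x)
    (hM : ∀ m : ℕ, ∀ x ∈ Set.Icc (0:ℝ) 1, |iteratedDerivWithin m u (Set.Icc 0 1) x| ≤ M m)
    (n : ℕ) {x : ℝ} (hx : x ∈ Set.Ioo (0:ℝ) 1) :
    |iteratedDerivWithin (n+2) u (Set.Icc 0 1) x| ≤ ε₁⁻¹ *
      (ε₂ * (∑ i ∈ Finset.range (n+1),
          (n.choose i : ℝ) * (C_b * i.factorial * γ_b ^ i) * M (n+1-i))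
       + (∑ i ∈ Finset.range (n+1),
          (n.choose i : ℝ) * (C_c * i.factorial * γ_c ^ i) * M (n-i))
       + C_f * n.factorial * γ_f ^ n) := by
  have hSsub : Set.Ioo (0:ℝ) 1 ⊆ Set.Icc 0 1 := Set.Ioo_subset_Icc_self
  have hS : UniqueDiffOn ℝ (Set.Ioo (0:ℝ) 1) := isOpen_Ioo.uniqueDiffOn
  have hxT : x ∈ Set.Icc (0:ℝ) 1 := hSsub hx
  set S := Set.Ioo (0:ℝ) 1 with hSdef
  have huS : ContDiffOn ℝ (n : ℕ) u S := (hu.mono hSsub).of_le (by exact_mod_cast le_top)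
  have hdu : ContDiffOn ℝ (n : ℕ) (deriv u) S :=
    (hu.mono hSsub).deriv_of_isOpen isOpen_Ioo (by exact_mod_cast le_top)
  have hbS : ContDiffOn ℝ (n : ℕ) b S := (hban.mono hSsub).contDiffOn hS
  have hcS : ContDiffOn ℝ (n : ℕ) c S := (hcan.mono hSsub).contDiffOn hS
  have hfS : ContDiffOn ℝ (n : ℕ) f S := (hfan.mono hSsub).contDiffOn hS
  set H : ℝ → ℝ := fun y => ε₂ * (b y * deriv u y) + (c y * u y - f y) with hHdef
  have hH : ContDiffOn ℝ (n : ℕ) H S :=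
    (contDiffOn_const.mul (hbS.mul hdu)).add ((hcS.mul huS).sub hfS)
  have hode' : ∀ y ∈ S, deriv (deriv u) y = ε₁⁻¹ * H y := by
    intro y hy
    have h2 : iteratedDerivWithin 2 u (Set.Icc 0 1) y = deriv (deriv u) y := by
      rw [itDW_Icc_Ioo hy, itDW_open hy, iteratedDeriv_succ, iteratedDeriv_one]
    have h1 : derivWithin u (Set.Icc 0 1) y = deriv u y :=
      derivWithin_of_mem_nhds (Icc_mem_nhds hy.1 hy.2)
    have h := hode y hy
    rw [h2, h1] at h
    have hne : ε₁ ≠ 0 := ne_of_gt hε₁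
    field_simp [hHdef]
    nlinarith [h]
  have hw : Set.EqOn (derivWithin (derivWithin u S) S) (fun y => ε₁⁻¹ * H y) S := by
    intro y hy
    have e1 : derivWithin (derivWithin u S) S y = derivWithin (deriv u) S y :=
      derivWithin_congr (fun z hz => derivWithin_of_isOpen isOpen_Ioo hz)
        (derivWithin_of_isOpen isOpen_Ioo hy)
    rw [e1, derivWithin_of_isOpen isOpen_Ioo hy]
    exact hode' y hy
  have hstep : iteratedDerivWithin (n+2) u (Set.Icc 0 1) x
      = ε₁⁻¹ * iteratedDerivWithin n H S x := by
    rw [itDW_Icc_Ioo hx]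
    rw [show n + 2 = (n + 1) + 1 from rfl, iteratedDerivWithin_succ',
      show n + 1 = n + 1 from rfl, iteratedDerivWithin_succ',
      iteratedDerivWithin_congr hw hx,
      iteratedDerivWithin_const_mul hx hS ε₁⁻¹ (hH x hx)]
  have hP : ContDiffOn ℝ (n : ℕ) (fun y => b y * deriv u y) S := hbS.mul hdu
  have hQ : ContDiffOn ℝ (n : ℕ) (fun y => c y * u y) S := hcS.mul huS
  have hsplit : iteratedDerivWithin n H S x
      = ε₂ * iteratedDerivWithin n (fun y => b y * deriv u y) S x
        + (iteratedDerivWithin n (fun y => c y * u y) S x - iteratedDerivWithin n f S x) := by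
    have h1 : ContDiffOn ℝ (n : ℕ) (fun y => ε₂ * (b y * deriv u y)) S :=
      contDiffOn_const.mul hP
    have h2 : ContDiffOn ℝ (n : ℕ) ((fun y => c y * u y) - f) S := hQ.sub hfS
    have e : iteratedDerivWithin n H S x
        = iteratedDerivWithin n
            ((fun y => ε₂ * (b y * deriv u y)) + ((fun y => c y * u y) - f)) S x := rfl
    rw [e, iteratedDerivWithin_add hx hS (h1 x hx) (h2 x hx),
      iteratedDerivWithin_sub hx hS (hQ x hx) (hfS x hx),
      iteratedDerivWithin_const_mul hx hS ε₂ (hP x hx)]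
  have hu_conv : ∀ m : ℕ, |iteratedDerivWithin m (deriv u) S x| ≤ M (m+1) := by
    intro m
    have e1 : iteratedDerivWithin m (deriv u) S x
        = iteratedDerivWithin m (derivWithin u S) S x :=
      iteratedDerivWithin_congr (fun z hz => (derivWithin_of_isOpen isOpen_Ioo hz).symm) hx
    rw [e1, ← iteratedDerivWithin_succ', ← itDW_Icc_Ioo hx]
    exact hM (m+1) x hxT
  have hbterm : |iteratedDerivWithin n (fun y => b y * deriv u y) S x|
      ≤ ∑ i ∈ Finset.range (n+1), (n.choose i : ℝ) * (C_b * i.factorial * γ_b ^ i) * M (n+1-i) := by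
    have h0 := norm_iteratedFDerivWithin_mul_le (𝕜 := ℝ) (f := b) (g := deriv u)
      hbS hdu hS hx (le_refl (n : WithTop ℕ∞))
    rw [norm_iteratedFDerivWithin_eq_norm_iteratedDerivWithin] at h0
    rw [Real.norm_eq_abs] at h0
    refine h0.trans (Finset.sum_le_sum ?_)
    intro i hi
    have hin : i ≤ n := Nat.lt_succ_iff.mp (Finset.mem_range.mp hi)
    have hb' : ‖iteratedFDerivWithin ℝ i b S x‖ ≤ C_b * i.factorial * γ_b ^ i := by
      rw [norm_iteratedFDerivWithin_eq_norm_iteratedDerivWithin, Real.norm_eq_abs,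
        itDW_open hx]
      exact hbb i x hxT
    have hu' : ‖iteratedFDerivWithin ℝ (n - i) (deriv u) S x‖ ≤ M (n+1-i) := by
      rw [norm_iteratedFDerivWithin_eq_norm_iteratedDerivWithin, Real.norm_eq_abs]
      have := hu_conv (n - i)
      rwa [show n - i + 1 = n + 1 - i by omega] at this
    have h1 : (0:ℝ) ≤ (n.choose i : ℝ) := Nat.cast_nonneg _
    have h2 : (0:ℝ) ≤ ‖iteratedFDerivWithin ℝ i b S x‖ := norm_nonneg _
    have h3 : (0:ℝ) ≤ ‖iteratedFDerivWithin ℝ (n-i) (deriv u) S x‖ := norm_nonneg _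
    have h4 : (0:ℝ) ≤ C_b * i.factorial * γ_b ^ i := le_trans h2 hb'
    exact mul_le_mul (mul_le_mul le_rfl hb' h2 h1) hu' h3 (mul_nonneg h1 h4)
  have hcterm : |iteratedDerivWithin n (fun y => c y * u y) S x|
      ≤ ∑ i ∈ Finset.range (n+1), (n.choose i : ℝ) * (C_c * i.factorial * γ_c ^ i) * M (n-i) := by
    have h0 := norm_iteratedFDerivWithin_mul_le (𝕜 := ℝ) (f := c) (g := u)
      hcS huS hS hx (le_refl (n : WithTop ℕ∞))
    rw [norm_iteratedFDerivWithin_eq_norm_iteratedDerivWithin, Real.norm_eq_abs] at h0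
    refine h0.trans (Finset.sum_le_sum ?_)
    intro i hi
    have hc' : ‖iteratedFDerivWithin ℝ i c S x‖ ≤ C_c * i.factorial * γ_c ^ i := by
      rw [norm_iteratedFDerivWithin_eq_norm_iteratedDerivWithin, Real.norm_eq_abs,
        itDW_open hx]
      exact hcb i x hxT
    have hu' : ‖iteratedFDerivWithin ℝ (n - i) u S x‖ ≤ M (n-i) := by
      rw [norm_iteratedFDerivWithin_eq_norm_iteratedDerivWithin, Real.norm_eq_abs,
        ← itDW_Icc_Ioo hx]
      exact hM (n-i) x hxT
    have h1 : (0:ℝ) ≤ (n.choose i : ℝ) := Nat.cast_nonneg _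
    have h3 : (0:ℝ) ≤ ‖iteratedFDerivWithin ℝ (n-i) u S x‖ := norm_nonneg _
    have h4 : (0:ℝ) ≤ C_c * i.factorial * γ_c ^ i := le_trans (norm_nonneg _) hc'
    exact mul_le_mul (mul_le_mul le_rfl hc' (norm_nonneg _) h1) hu' h3 (mul_nonneg h1 h4)
  have hfterm : |iteratedDerivWithin n f S x| ≤ C_f * n.factorial * γ_f ^ n := by
    rw [itDW_open hx]; exact hfb n x hxT
  have hMnn : ∀ m, 0 ≤ M m := by
    intro m
    exact le_trans (abs_nonneg _) (hM m 0 (by constructor <;> norm_num))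
  rw [hstep, abs_mul, abs_of_pos (inv_pos.mpr hε₁)]
  apply mul_le_mul_of_nonneg_left _ (le_of_lt (inv_pos.mpr hε₁))
  rw [hsplit]
  set P := iteratedDerivWithin n (fun y => b y * deriv u y) S x with hPd
  set Q := iteratedDerivWithin n (fun y => c y * u y) S x with hQd
  set F := iteratedDerivWithin n f S x with hFd
  have t1 : |ε₂ * P + (Q - F)| ≤ ε₂ * |P| + |Q| + |F| := by
    have a1 := abs_add_le (ε₂ * P) (Q - F)
    have a2 := abs_add_le Q (-F)
    rw [abs_neg] at a2
    rw [abs_mul, abs_of_pos hε₂] at a1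
    rw [sub_eq_add_neg] at a1 ⊢
    linarith
  have t2 := mul_le_mul_of_nonneg_left hbterm (le_of_lt hε₂)
  linarith [t1, t2, hcterm, hfterm]

lemma landau (u : ℝ → ℝ) (hu : ContDiffOn ℝ (⊤ : ℕ∞) u (Set.Icc 0 1))
    (M0 M2 : ℝ) (hM0 : ∀ x ∈ Set.Icc (0:ℝ) 1, |u x| ≤ M0)
    (hM2 : ∀ x ∈ Set.Icc (0:ℝ) 1, |iteratedDerivWithin 2 u (Set.Icc 0 1) x| ≤ M2)
    {h : ℝ} (hh0 : 0 < h) (hh1 : h ≤ 1)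
    {x : ℝ} (hx : x ∈ Set.Ioo (0:ℝ) 1) :
    |deriv u x| ≤ 2 / h * M0 + h * M2 := by
  have hM2nn : 0 ≤ M2 :=
    le_trans (abs_nonneg _) (hM2 0 (by constructor <;> norm_num))
  set a := min x (1 - h) with hadef
  have ha0 : 0 ≤ a := le_min hx.1.le (by linarith)
  have hah : a + h ≤ 1 := by
    have := min_le_right x (1 - h); linarith
  have hax : a ≤ x := min_le_left _ _
  have hxa : x ≤ a + h := by
    rcases le_total x (1 - h) with hc | hc
    · rw [hadef, min_eq_left hc]; linarith
    · rw [hadef, min_eq_right hc]; linarith [hx.2]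
  have hu1 : DifferentiableOn ℝ u (Set.Ioo 0 1) :=
    (hu.mono Set.Ioo_subset_Icc_self).differentiableOn (by simp)
  have hdiffS : ∀ y ∈ Set.Ioo (0:ℝ) 1, HasDerivAt u (deriv u y) y := fun y hy =>
    (hu1.differentiableAt (isOpen_Ioo.mem_nhds hy)).hasDerivAt
  have hcont : ContinuousOn u (Set.Icc a (a + h)) :=
    hu.continuousOn.mono (Set.Icc_subset_Icc ha0 hah)
  obtain ⟨ξ, hξ, hslope⟩ := exists_hasDerivAt_eq_slope u (deriv u)
    (show a < a + h by linarith) hcont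
    (fun y hy => hdiffS y ⟨lt_of_le_of_lt ha0 hy.1, lt_of_lt_of_le hy.2 hah⟩)
  have hξS : ξ ∈ Set.Ioo (0:ℝ) 1 := ⟨lt_of_le_of_lt ha0 hξ.1, lt_of_lt_of_le hξ.2 hah⟩
  have hslope_bound : |deriv u ξ| ≤ 2 / h * M0 := by
    rw [hslope, show a + h - a = h by ring, abs_div, abs_of_pos hh0]
    have h1 : |u (a + h) - u a| ≤ 2 * M0 := by
      have b1 := hM0 (a + h) ⟨by linarith, hah⟩
      have b2 := hM0 a ⟨ha0, by linarith⟩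
      linarith [abs_sub_abs_le_abs_sub (u (a+h)) (u a), abs_add_le (u (a+h)) (-(u a)),
        abs_neg (u a), abs_sub (u (a+h)) (u a)]
    calc |u (a + h) - u a| / h ≤ 2 * M0 / h := by gcongr
      _ = 2 / h * M0 := by ring
  have hdu' : ContDiffOn ℝ (⊤ : ℕ∞) (deriv u) (Set.Ioo 0 1) :=
    (hu.mono Set.Ioo_subset_Icc_self).deriv_of_isOpen isOpen_Ioo (by simp)
  have hdud : DifferentiableOn ℝ (deriv u) (Set.Ioo 0 1) := hdu'.differentiableOn (by simp)
  have hd2 : ∀ y ∈ Set.Ioo (0:ℝ) 1,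
      HasDerivWithinAt (deriv u) (deriv (deriv u) y) (Set.Ioo 0 1) y := fun y hy =>
    ((hdud.differentiableAt (isOpen_Ioo.mem_nhds hy)).hasDerivAt).hasDerivWithinAt
  have hbound : ∀ y ∈ Set.Ioo (0:ℝ) 1, ‖deriv (deriv u) y‖ ≤ M2 := by
    intro y hy
    rw [Real.norm_eq_abs]
    have e : iteratedDerivWithin 2 u (Set.Icc 0 1) y = deriv (deriv u) y := by
      rw [itDW_Icc_Ioo hy, itDW_open hy, iteratedDeriv_succ, iteratedDeriv_one]
    rw [← e]
    exact hM2 y (Set.Ioo_subset_Icc_self hy)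
  have hlip := (convex_Ioo (0:ℝ) 1).norm_image_sub_le_of_norm_hasDerivWithin_le
    hd2 hbound hξS hx
  rw [Real.norm_eq_abs, Real.norm_eq_abs] at hlip
  have hxξ : |x - ξ| ≤ h := by
    rw [abs_sub_le_iff]
    constructor <;> [linarith [hξ.1.le]; linarith [hξ.2.le]]
  have h2 : M2 * |x - ξ| ≤ M2 * h := mul_le_mul_of_nonneg_left hxξ hM2nn
  have h3 : |deriv u x| - |deriv u ξ| ≤ |deriv u x - deriv u ξ| :=
    abs_sub_abs_le_abs_sub _ _
  have hMh : M2 * h = h * M2 := by ring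
  linarith

lemma coeff2 {C_b C_c C_f CC KK : ℝ} (hCb : 0 < C_b) (hCc : 0 < C_c) (hCf : 0 < C_f)
    (hCpos : 0 < CC) (hKpos : 0 < KK) (hK1 : 1 ≤ KK) (hCf_le : C_f ≤ CC)
    (hKmain : 2*C_b+2*C_c+2 ≤ KK) (m : ℕ) :
    2*C_b*CC*KK^(m+1) + (2*C_c*CC + C_f) * KK^m ≤ CC * KK^(m+2) := by
  have w1 : CC*KK*(2*C_b+2*C_c+2) ≤ CC*KK*KK :=
    mul_le_mul_of_nonneg_left hKmain (mul_nonneg hCpos.le hKpos.le)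
  have e0 : (2*C_c*CC) * 1 ≤ (2*C_c*CC) * KK :=
    mul_le_mul_of_nonneg_left hK1 (mul_nonneg (mul_nonneg (by norm_num) hCc.le) hCpos.le)
  have e0' : CC * 1 ≤ CC * KK := mul_le_mul_of_nonneg_left hK1 hCpos.le
  have e1 : 0 ≤ CC * KK := mul_nonneg hCpos.le hKpos.le
  have coeff : 2*C_b*CC*KK + (2*C_c*CC + C_f) ≤ CC*KK^2 := by nlinarith [w1, e0, e0']
  have hKm0 : (0:ℝ) ≤ KK^m := pow_nonneg hKpos.le m
  have e4 : (2*C_b*CC*KK + (2*C_c*CC + C_f)) * KK^m ≤ (CC*KK^2) * KK^m :=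
    mul_le_mul_of_nonneg_right coeff hKm0
  have p1 : KK^(m+1) = KK * KK^m := by rw [pow_succ]; ring
  have p2 : KK^(m+2) = KK^2 * KK^m := by
    rw [show m+2 = 2+m from by omega, pow_add]
  rw [p1, p2]
  nlinarith [e4]

end Stmt4Aux
set_option maxHeartbeats 2000000 in
theorem stmt_4
    (b c f : ℝ → ℝ) (C_b C_c C_f γ_b γ_c γ_f β γ : ℝ)
    (hCb : 0 < C_b) (hCc : 0 < C_c) (hCf : 0 < C_f)
    (hgb : 0 < γ_b) (hgc : 0 < γ_c) (hgf : 0 < γ_f)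
    (hβ : 0 < β) (hγ : 0 < γ)
    (hban : AnalyticOnNhd ℝ b (Set.Icc 0 1))
    (hcan : AnalyticOnNhd ℝ c (Set.Icc 0 1))
    (hfan : AnalyticOnNhd ℝ f (Set.Icc 0 1))
    (hbb : ∀ n : ℕ, ∀ x ∈ Set.Icc (0:ℝ) 1, |iteratedDeriv n b x| ≤ C_b * n.factorial * γ_b ^ n)
    (hcb : ∀ n : ℕ, ∀ x ∈ Set.Icc (0:ℝ) 1, |iteratedDeriv n c x| ≤ C_c * n.factorial * γ_c ^ n)
    (hfb : ∀ n : ℕ, ∀ x ∈ Set.Icc (0:ℝ) 1, |iteratedDeriv n f x| ≤ C_f * n.factorial * γ_f ^ n)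
    (hblow : ∀ x ∈ Set.Icc (0:ℝ) 1, β ≤ b x)
    (hclow : ∀ x ∈ Set.Icc (0:ℝ) 1, γ ≤ c x)
    (C₀ : ℝ) (hC₀ : 0 < C₀) :
    ∃ C K : ℝ, 0 < C ∧ 0 < K ∧
      ∀ ε₁ ε₂ : ℝ, ε₁ ∈ Set.Ioc (0:ℝ) 1 → ε₂ ∈ Set.Ioc (0:ℝ) 1 →
      (∃ ρ : ℝ, 0 < ρ ∧ ∀ x ∈ Set.Icc (0:ℝ) 1, ρ ≤ c x - ε₂ / 2 * deriv b x) →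
      ∀ u : ℝ → ℝ, ContDiffOn ℝ (⊤ : ℕ∞) u (Set.Icc 0 1) →
        (∀ x ∈ Set.Ioo (0:ℝ) 1,
          -ε₁ * iteratedDerivWithin 2 u (Set.Icc 0 1) x
            + ε₂ * b x * derivWithin u (Set.Icc 0 1) x + c x * u x = f x) →
        u 0 = 0 → u 1 = 0 →
        (∀ x ∈ Set.Icc (0:ℝ) 1, |u x| ≤ C₀) →
        ∀ n : ℕ, ∀ x ∈ Set.Icc (0:ℝ) 1,
          |iteratedDerivWithin n u (Set.Icc 0 1) x|
            ≤ C * K ^ n * (max (max (n:ℝ) ε₁⁻¹) ε₂⁻¹) ^ n := by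
  classical
  set A : ℝ := 4*(2*C_b+2)*C₀ + 2*C_c*C₀ + 2*C_f with hAdef
  have hApos : 0 < A := by nlinarith [mul_pos hCc hC₀, mul_pos hCb hC₀]
  set CC : ℝ := C₀ + A + C_f + 1 with hCCdef
  set KK : ℝ := 2*γ_b + 2*γ_c + γ_f + 2*C_b + 2*C_c + 2 with hKKdef
  have hCpos : 0 < CC := by rw [hCCdef]; linarith
  have hKpos : 0 < KK := by rw [hKKdef]; linarith
  have hK1 : 1 ≤ KK := by rw [hKKdef]; linarith
  have hKgb : 2*γ_b ≤ KK := by rw [hKKdef]; linarith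
  have hKgc : 2*γ_c ≤ KK := by rw [hKKdef]; linarith
  have hKgf : γ_f ≤ KK := by rw [hKKdef]; linarith
  have hKmain : 2*C_b+2*C_c+2 ≤ KK := by rw [hKKdef]; linarith
  have hCf_le : C_f ≤ CC := by rw [hCCdef]; linarith
  have hA_le : A ≤ CC := by rw [hCCdef]; linarith
  have hC₀_le : C₀ ≤ CC := by rw [hCCdef]; linarith
  refine ⟨CC, KK, hCpos, hKpos, ?_⟩
  intro ε₁ ε₂ hε₁ hε₂ _hρ u hu hode _hu0 _hu1 husup
  have hT : UniqueDiffOn ℝ (Set.Icc (0:ℝ) 1) := uniqueDiffOn_Icc (by norm_num)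
  have hsub : Set.Ioo (0:ℝ) 1 ⊆ Set.Icc 0 1 := Set.Ioo_subset_Icc_self
  set M : ℕ → ℝ := fun n =>
    sSup ((fun x => |iteratedDerivWithin n u (Set.Icc 0 1) x|) '' Set.Icc 0 1) with hMdef
  have hcontD : ∀ n : ℕ, ContinuousOn (iteratedDerivWithin n u (Set.Icc 0 1)) (Set.Icc 0 1) :=
    fun n => hu.continuousOn_iteratedDerivWithin (by exact_mod_cast le_top) hT
  have hbdd : ∀ n : ℕ,
      BddAbove ((fun x => |iteratedDerivWithin n u (Set.Icc 0 1) x|) '' Set.Icc 0 1) :=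
    fun n => (isCompact_Icc.image_of_continuousOn (hcontD n).abs).bddAbove
  have hMub : ∀ n : ℕ, ∀ x ∈ Set.Icc (0:ℝ) 1,
      |iteratedDerivWithin n u (Set.Icc 0 1) x| ≤ M n :=
    fun n x hx => le_csSup (hbdd n) ⟨x, hx, rfl⟩
  have hMle : ∀ (n : ℕ) (B : ℝ),
      (∀ x ∈ Set.Icc (0:ℝ) 1, |iteratedDerivWithin n u (Set.Icc 0 1) x| ≤ B) → M n ≤ B := by
    intro n B hB
    apply csSup_le ((Set.nonempty_Icc.mpr (by norm_num)).image _)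
    rintro y ⟨x, hx, rfl⟩
    exact hB x hx
  have hMnn : ∀ n, 0 ≤ M n :=
    fun n => le_trans (abs_nonneg _) (hMub n 0 (by constructor <;> norm_num))
  have hM0C : M 0 ≤ C₀ := hMle 0 C₀ (fun x hx => by simpa using husup x hx)
  have hE1 : 1 ≤ ε₁⁻¹ := (one_le_inv₀ hε₁.1).mpr hε₁.2
  have hE0 : 0 < ε₁⁻¹ := inv_pos.mpr hε₁.1
  -- recurrence at sup level
  have hrecM : ∀ n : ℕ, M (n+2) ≤ ε₁⁻¹ *
      (ε₂ * (∑ i ∈ Finset.range (n+1),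
          (n.choose i : ℝ) * (C_b * i.factorial * γ_b ^ i) * M (n+1-i))
       + (∑ i ∈ Finset.range (n+1),
          (n.choose i : ℝ) * (C_c * i.factorial * γ_c ^ i) * M (n-i))
       + C_f * n.factorial * γ_f ^ n) := by
    intro n
    apply hMle
    apply Stmt4Aux.closure_bound (hcontD (n+2))
    intro x hx
    exact Stmt4Aux.rec_bound b c f u C_b C_c C_f γ_b γ_c γ_f ε₁ ε₂ M hε₁.1 hε₂.1
      hban hcan hfan hbb hcb hfb hu hode hMub n hx
  -- second derivative bound
  have hM2 : M 2 ≤ ε₁⁻¹ * (ε₂ * (C_b * M 1) + (C_c * M 0 + C_f)) := by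
    calc M 2 ≤ _ := hrecM 0
      _ = ε₁⁻¹ * (ε₂ * (C_b * M 1) + (C_c * M 0 + C_f)) := by
        rw [Finset.sum_range_one, Finset.sum_range_one]
        norm_num
        exact Or.inl (by ring)
  -- Landau bound for M 1
  set D : ℝ := 2*C_b + 2 with hDdef
  have hD0 : 0 < D := by rw [hDdef]; linarith
  have hD1 : 1 ≤ D := by rw [hDdef]; linarith
  set hh : ℝ := ε₁ / D with hhdef
  have hh0 : 0 < hh := div_pos hε₁.1 hD0
  have hh1 : hh ≤ 1 := by rw [hhdef, div_le_one hD0, hDdef]; linarith [hε₁.2]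
  have hM0pt : ∀ x ∈ Set.Icc (0:ℝ) 1, |u x| ≤ M 0 := fun x hx => by simpa using hMub 0 x hx
  have hL : M 1 ≤ 2 / hh * M 0 + hh * M 2 := by
    apply hMle
    apply Stmt4Aux.closure_bound (hcontD 1)
    intro x hx
    have e1 : iteratedDerivWithin 1 u (Set.Icc 0 1) x = deriv u x := by
      rw [iteratedDerivWithin_one,
        derivWithin_of_mem_nhds (Icc_mem_nhds hx.1 hx.2)]
    rw [e1]
    exact Stmt4Aux.landau u hu (M 0) (M 2) hM0pt (hMub 2) hh0 hh1 hx
  have hε₁ne : ε₁ ≠ 0 := ne_of_gt hε₁.1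
  have hDne : D ≠ 0 := ne_of_gt hD0
  have hM1 : M 1 ≤ A * ε₁⁻¹ := by
    have t1 : hh * M 2 ≤ hh * (ε₁⁻¹ * (ε₂ * (C_b * M 1) + (C_c * M 0 + C_f))) :=
      mul_le_mul_of_nonneg_left hM2 hh0.le
    have t2 : hh * (ε₁⁻¹ * (ε₂ * (C_b * M 1) + (C_c * M 0 + C_f)))
        = D⁻¹ * (ε₂ * (C_b * M 1)) + D⁻¹ * (C_c * M 0 + C_f) := by
      rw [hhdef]; field_simp
    have t3 : D⁻¹ * (ε₂ * (C_b * M 1)) ≤ (1/2) * M 1 := by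
      have k1 : ε₂ * (C_b * M 1) ≤ C_b * M 1 := by
        have := mul_nonneg (sub_nonneg.mpr hε₂.2) (mul_nonneg hCb.le (hMnn 1))
        nlinarith [this]
      have k2 : D⁻¹ * (ε₂ * (C_b * M 1)) ≤ D⁻¹ * (C_b * M 1) :=
        mul_le_mul_of_nonneg_left k1 (inv_nonneg.mpr hD0.le)
      have k3 : D⁻¹ * (C_b * M 1) ≤ (1/2) * M 1 := by
        have e : C_b * M 1 ≤ (1/2) * M 1 * D := by
          rw [hDdef]; have := hMnn 1; nlinarith [this]
        calc D⁻¹ * (C_b * M 1) ≤ D⁻¹ * ((1/2) * M 1 * D) :=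
              mul_le_mul_of_nonneg_left e (inv_nonneg.mpr hD0.le)
          _ = (1/2) * M 1 := by field_simp
      linarith
    have t4 : D⁻¹ * (C_c * M 0 + C_f) ≤ C_c * M 0 + C_f := by
      have k1 : D⁻¹ ≤ 1 := by rw [inv_eq_one_div, div_le_one hD0]; exact hD1
      have k2 : 0 ≤ C_c * M 0 + C_f := by
        have := mul_nonneg hCc.le (hMnn 0); linarith
      have h5 := mul_nonneg (sub_nonneg.mpr k1) k2
      nlinarith [h5]
    have t5 : 2 / hh * M 0 = 2 * D * (ε₁⁻¹ * M 0) := by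
      rw [hhdef]; field_simp
    have t6 : ε₁⁻¹ * M 0 ≤ ε₁⁻¹ * C₀ := mul_le_mul_of_nonneg_left hM0C hE0.le
    have t7 : M 1 ≤ 2*D*(ε₁⁻¹*M 0) + (1/2)*M 1 + (C_c*M 0 + C_f) := by
      rw [t5] at hL
      rw [t2] at t1
      linarith
    have t8 : C_c * M 0 ≤ C_c * C₀ := mul_le_mul_of_nonneg_left hM0C hCc.le
    have t6' : 2*D*(ε₁⁻¹*M 0) ≤ 2*D*(ε₁⁻¹*C₀) :=
      mul_le_mul_of_nonneg_left t6 (by linarith)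
    have t9 : 2*(C_c*C₀) + 2*C_f ≤ (2*(C_c*C₀) + 2*C_f) * ε₁⁻¹ := by
      have hv : 0 ≤ 2*(C_c*C₀) + 2*C_f := by nlinarith [mul_pos hCc hC₀]
      have h5 := mul_nonneg hv (sub_nonneg.mpr hE1)
      nlinarith [h5]
    calc M 1 ≤ 4*D*(ε₁⁻¹*C₀) + (2*(C_c*C₀) + 2*C_f) := by linarith
      _ ≤ 4*D*(ε₁⁻¹*C₀) + (2*(C_c*C₀) + 2*C_f)*ε₁⁻¹ := by linarith
      _ = A * ε₁⁻¹ := by rw [hAdef, hDdef]; ring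
  -- the scale function
  set ν : ℕ → ℝ := fun m => max (max (m:ℝ) ε₁⁻¹) ε₂⁻¹ with hνdef
  have hνE : ∀ m, ε₁⁻¹ ≤ ν m := fun m => le_trans (le_max_right _ _) (le_max_left _ _)
  have hν1 : ∀ m, 1 ≤ ν m := fun m => le_trans hE1 (hνE m)
  have hν0 : ∀ m, 0 ≤ ν m := fun m => le_trans zero_le_one (hν1 m)
  have hνcast : ∀ m : ℕ, (m:ℝ) ≤ ν m := fun m => le_trans (le_max_left _ _) (le_max_left _ _)
  have hνmono : ∀ k m : ℕ, k ≤ m → ν k ≤ ν m := fun k m hkm =>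
    max_le_max (max_le_max (Nat.cast_le.mpr hkm) le_rfl) le_rfl
  have hKne : KK ≠ 0 := ne_of_gt hKpos
  -- main induction
  have key : ∀ n : ℕ, M n ≤ CC * KK ^ n * ν n ^ n := by
    intro n
    induction n using Nat.strong_induction_on with
    | _ n IH =>
      rcases n with _ | (_ | m)
      · -- n = 0
        simpa using le_trans hM0C hC₀_le
      · -- n = 1
        have h1 : A * ε₁⁻¹ ≤ CC * KK ^ 1 * ν 1 ^ 1 := by
          rw [pow_one, pow_one]
          have e1 : A * ε₁⁻¹ ≤ (CC*KK) * ε₁⁻¹ := by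
            have e0 : CC * 1 ≤ CC * KK := mul_le_mul_of_nonneg_left hK1 hCpos.le
            have : A ≤ CC*KK := by linarith
            exact mul_le_mul_of_nonneg_right this hE0.le
          have e2 : (CC*KK) * ε₁⁻¹ ≤ (CC*KK) * ν 1 :=
            mul_le_mul_of_nonneg_left (hνE 1) (by positivity)
          calc A * ε₁⁻¹ ≤ (CC*KK) * ε₁⁻¹ := e1
            _ ≤ (CC*KK) * ν 1 := e2
            _ = CC * KK * ν 1 := rfl
        exact le_trans hM1 h1
      · -- n = m + 2
        show M (m+2) ≤ CC * KK ^ (m+2) * ν (m+2) ^ (m+2)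
        set N := ν (m+2) with hNdef
        have hN1 : 1 ≤ N := hν1 (m+2)
        have hN0 : 0 ≤ N := hν0 (m+2)
        have cm : (m:ℝ) ≤ N := by
          refine le_trans ?_ (hνcast (m+2))
          push_cast; linarith
        -- the b-sum
        have hbsum : (∑ i ∈ Finset.range (m+1),
            (m.choose i : ℝ) * (C_b * i.factorial * γ_b ^ i) * M (m+1-i))
            ≤ 2 * (C_b * CC * KK^(m+1) * N^(m+1)) := by
          have hterm : ∀ i ∈ Finset.range (m+1),
              (m.choose i : ℝ) * (C_b * i.factorial * γ_b ^ i) * M (m+1-i)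
              ≤ (C_b * CC * KK^(m+1) * N^(m+1)) * (γ_b * KK⁻¹)^i := by
            intro i hi
            have him : i ≤ m := Nat.lt_succ_iff.mp (Finset.mem_range.mp hi)
            have c1 : (m.choose i : ℝ) * (i.factorial : ℝ) ≤ N ^ i :=
              le_trans (Stmt4Aux.chooseFact m i) (pow_le_pow_left₀ (Nat.cast_nonneg m) cm i)
            have c2 : M (m+1-i) ≤ CC * KK^(m+1-i) * N^(m+1-i) := by
              refine (IH (m+1-i) (by omega)).trans ?_
              have hp : ν (m+1-i) ^ (m+1-i) ≤ N ^ (m+1-i) :=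
                pow_le_pow_left₀ (hν0 _) (hνmono _ _ (by omega)) _
              have hcoef : (0:ℝ) ≤ CC * KK^(m+1-i) :=
                mul_nonneg hCpos.le (pow_nonneg hKpos.le _)
              exact mul_le_mul_of_nonneg_left hp hcoef
            have c3 : 0 ≤ M (m+1-i) := hMnn _
            have c4 : (0:ℝ) ≤ C_b * γ_b ^ i := mul_nonneg hCb.le (pow_nonneg hgb.le i)
            have c5 : (0:ℝ) ≤ N^i * (C_b * γ_b ^ i) :=
              mul_nonneg (pow_nonneg hN0 i) c4
            calc (m.choose i : ℝ) * (C_b * i.factorial * γ_b ^ i) * M (m+1-i)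
                = ((m.choose i : ℝ) * (i.factorial : ℝ)) * (C_b * γ_b ^ i) * M (m+1-i) := by
                  push_cast; ring
              _ ≤ (N^i * (C_b * γ_b ^ i)) * (CC * KK^(m+1-i) * N^(m+1-i)) := by
                  apply mul_le_mul (mul_le_mul_of_nonneg_right c1 c4) c2 c3 c5
              _ = (C_b * CC * KK^(m+1) * N^(m+1)) * (γ_b * KK⁻¹)^i := by
                  rw [Stmt4Aux.Kpow hKne (by omega : i ≤ m+1),
                    show N^(m+1) = N^i * N^(m+1-i) from by rw [← pow_add]; congr 1; omega,
                    mul_pow]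
                  ring
          have hr0 : (0:ℝ) ≤ γ_b * KK⁻¹ := mul_nonneg hgb.le (inv_nonneg.mpr hKpos.le)
          have hr12 : γ_b * KK⁻¹ ≤ 1/2 := by
            rw [← div_eq_mul_inv, div_le_iff₀ hKpos]; linarith
          have hcoef : (0:ℝ) ≤ C_b * CC * KK^(m+1) * N^(m+1) := by
            have := mul_nonneg (mul_nonneg (mul_nonneg hCb.le hCpos.le)
              (pow_nonneg hKpos.le (m+1))) (pow_nonneg hN0 (m+1))
            exact this
          calc (∑ i ∈ Finset.range (m+1),
              (m.choose i : ℝ) * (C_b * i.factorial * γ_b ^ i) * M (m+1-i))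
              ≤ ∑ i ∈ Finset.range (m+1),
                (C_b * CC * KK^(m+1) * N^(m+1)) * (γ_b * KK⁻¹)^i := Finset.sum_le_sum hterm
            _ = (C_b * CC * KK^(m+1) * N^(m+1)) * ∑ i ∈ Finset.range (m+1), (γ_b * KK⁻¹)^i :=
                (Finset.mul_sum _ _ _).symm
            _ ≤ (C_b * CC * KK^(m+1) * N^(m+1)) * 2 :=
                mul_le_mul_of_nonneg_left (Stmt4Aux.geom_le_two hr0 hr12 _) hcoef
            _ = 2 * (C_b * CC * KK^(m+1) * N^(m+1)) := by ring
        -- the c-sum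
        have hcsum : (∑ i ∈ Finset.range (m+1),
            (m.choose i : ℝ) * (C_c * i.factorial * γ_c ^ i) * M (m-i))
            ≤ 2 * (C_c * CC * KK^m * N^m) := by
          have hterm : ∀ i ∈ Finset.range (m+1),
              (m.choose i : ℝ) * (C_c * i.factorial * γ_c ^ i) * M (m-i)
              ≤ (C_c * CC * KK^m * N^m) * (γ_c * KK⁻¹)^i := by
            intro i hi
            have him : i ≤ m := Nat.lt_succ_iff.mp (Finset.mem_range.mp hi)
            have c1 : (m.choose i : ℝ) * (i.factorial : ℝ) ≤ N ^ i :=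
              le_trans (Stmt4Aux.chooseFact m i) (pow_le_pow_left₀ (Nat.cast_nonneg m) cm i)
            have c2 : M (m-i) ≤ CC * KK^(m-i) * N^(m-i) := by
              refine (IH (m-i) (by omega)).trans ?_
              have hp : ν (m-i) ^ (m-i) ≤ N ^ (m-i) :=
                pow_le_pow_left₀ (hν0 _) (hνmono _ _ (by omega)) _
              have hcoef : (0:ℝ) ≤ CC * KK^(m-i) :=
                mul_nonneg hCpos.le (pow_nonneg hKpos.le _)
              exact mul_le_mul_of_nonneg_left hp hcoef
            have c3 : 0 ≤ M (m-i) := hMnn _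
            have c4 : (0:ℝ) ≤ C_c * γ_c ^ i := mul_nonneg hCc.le (pow_nonneg hgc.le i)
            have c5 : (0:ℝ) ≤ N^i * (C_c * γ_c ^ i) :=
              mul_nonneg (pow_nonneg hN0 i) c4
            calc (m.choose i : ℝ) * (C_c * i.factorial * γ_c ^ i) * M (m-i)
                = ((m.choose i : ℝ) * (i.factorial : ℝ)) * (C_c * γ_c ^ i) * M (m-i) := by
                  push_cast; ring
              _ ≤ (N^i * (C_c * γ_c ^ i)) * (CC * KK^(m-i) * N^(m-i)) := by
                  apply mul_le_mul (mul_le_mul_of_nonneg_right c1 c4) c2 c3 c5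
              _ = (C_c * CC * KK^m * N^m) * (γ_c * KK⁻¹)^i := by
                  rw [Stmt4Aux.Kpow hKne him,
                    show N^m = N^i * N^(m-i) from by rw [← pow_add]; congr 1; omega,
                    mul_pow]
                  ring
          have hr0 : (0:ℝ) ≤ γ_c * KK⁻¹ := mul_nonneg hgc.le (inv_nonneg.mpr hKpos.le)
          have hr12 : γ_c * KK⁻¹ ≤ 1/2 := by
            rw [← div_eq_mul_inv, div_le_iff₀ hKpos]; linarith
          have hcoef : (0:ℝ) ≤ C_c * CC * KK^m * N^m :=
            mul_nonneg (mul_nonneg (mul_nonneg hCc.le hCpos.le)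
              (pow_nonneg hKpos.le m)) (pow_nonneg hN0 m)
          calc (∑ i ∈ Finset.range (m+1),
              (m.choose i : ℝ) * (C_c * i.factorial * γ_c ^ i) * M (m-i))
              ≤ ∑ i ∈ Finset.range (m+1),
                (C_c * CC * KK^m * N^m) * (γ_c * KK⁻¹)^i := Finset.sum_le_sum hterm
            _ = (C_c * CC * KK^m * N^m) * ∑ i ∈ Finset.range (m+1), (γ_c * KK⁻¹)^i :=
                (Finset.mul_sum _ _ _).symm
            _ ≤ (C_c * CC * KK^m * N^m) * 2 :=
                mul_le_mul_of_nonneg_left (Stmt4Aux.geom_le_two hr0 hr12 _) hcoef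
            _ = 2 * (C_c * CC * KK^m * N^m) := by ring
        -- the f-term
        have hfterm2 : C_f * (m.factorial : ℝ) * γ_f ^ m ≤ C_f * N^m * KK^m := by
          have e1 : (m.factorial : ℝ) ≤ N^m :=
            le_trans (Stmt4Aux.factPow m) (pow_le_pow_left₀ (Nat.cast_nonneg m) cm m)
          have e2 : γ_f ^ m ≤ KK ^ m := pow_le_pow_left₀ hgf.le hKgf m
          have e3 : C_f * (m.factorial : ℝ) ≤ C_f * N^m :=
            mul_le_mul_of_nonneg_left e1 hCf.le
          apply mul_le_mul e3 e2 (pow_nonneg hgf.le m)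
          exact mul_nonneg hCf.le (pow_nonneg hN0 m)
        -- nonnegativity of the b-sum
        have hSb0 : 0 ≤ (∑ i ∈ Finset.range (m+1),
            (m.choose i : ℝ) * (C_b * i.factorial * γ_b ^ i) * M (m+1-i)) := by
          apply Finset.sum_nonneg
          intro i _
          apply mul_nonneg (mul_nonneg (Nat.cast_nonneg _) _) (hMnn _)
          exact mul_nonneg (mul_nonneg hCb.le (Nat.cast_nonneg _)) (pow_nonneg hgb.le _)
        have hε₂Sb : ε₂ * (∑ i ∈ Finset.range (m+1),
            (m.choose i : ℝ) * (C_b * i.factorial * γ_b ^ i) * M (m+1-i))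
            ≤ 2 * (C_b * CC * KK^(m+1) * N^(m+1)) := by
          calc ε₂ * (∑ i ∈ Finset.range (m+1),
              (m.choose i : ℝ) * (C_b * i.factorial * γ_b ^ i) * M (m+1-i))
              ≤ 1 * (2 * (C_b * CC * KK^(m+1) * N^(m+1))) :=
                mul_le_mul hε₂.2 hbsum hSb0 zero_le_one
            _ = 2 * (C_b * CC * KK^(m+1) * N^(m+1)) := one_mul _
        set X : ℝ := 2 * (C_b * CC * KK^(m+1) * N^(m+1)) + 2 * (C_c * CC * KK^m * N^m)
          + C_f * N^m * KK^m with hXdef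
        have hX0 : 0 ≤ X := by
          rw [hXdef]
          have n1 : (0:ℝ) ≤ C_b * CC * KK^(m+1) * N^(m+1) :=
            mul_nonneg (mul_nonneg (mul_nonneg hCb.le hCpos.le)
              (pow_nonneg hKpos.le _)) (pow_nonneg hN0 _)
          have n2 : (0:ℝ) ≤ C_c * CC * KK^m * N^m :=
            mul_nonneg (mul_nonneg (mul_nonneg hCc.le hCpos.le)
              (pow_nonneg hKpos.le _)) (pow_nonneg hN0 _)
          have n3 : (0:ℝ) ≤ C_f * N^m * KK^m :=
            mul_nonneg (mul_nonneg hCf.le (pow_nonneg hN0 _)) (pow_nonneg hKpos.le _)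
          linarith
        have step1 : M (m+2) ≤ ε₁⁻¹ * X := by
          refine (hrecM m).trans ?_
          apply mul_le_mul_of_nonneg_left _ hE0.le
          rw [hXdef]
          linarith [hε₂Sb, hcsum, hfterm2]
        have step2 : ε₁⁻¹ * X ≤ N * X := mul_le_mul_of_nonneg_right (hνE (m+2)) hX0
        have step3 : N * X ≤ CC * KK^(m+2) * N^(m+2) := by
          have q4 : N^(m+1) ≤ N^(m+2) := pow_le_pow_right₀ hN1 (by omega)
          have hKm0 : (0:ℝ) ≤ KK^m := pow_nonneg hKpos.le m
          have hNm2 : (0:ℝ) ≤ N^(m+2) := pow_nonneg hN0 _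
          have r1 : N * X = 2*C_b*CC*KK^(m+1)*N^(m+2)
              + (2*C_c*CC + C_f) * KK^m * N^(m+1) := by
            rw [hXdef, show N^(m+2) = N^(m+1)*N from pow_succ N (m+1),
              show N^(m+1) = N^m*N from pow_succ N m]
            ring
          have r2 : (2*C_c*CC + C_f) * KK^m * N^(m+1)
              ≤ (2*C_c*CC + C_f) * KK^m * N^(m+2) := by
            apply mul_le_mul_of_nonneg_left q4
            apply mul_nonneg _ hKm0
            have e0 := mul_pos hCc hCpos
            linarith
          have e1 : 2*C_b*CC*KK^(m+1) + (2*C_c*CC + C_f) * KK^m ≤ CC * KK^(m+2) :=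
            Stmt4Aux.coeff2 hCb hCc hCf hCpos hKpos hK1 hCf_le hKmain m
          have r3 : 2*C_b*CC*KK^(m+1)*N^(m+2) + (2*C_c*CC + C_f) * KK^m * N^(m+2)
              ≤ CC * KK^(m+2) * N^(m+2) := by
            calc 2*C_b*CC*KK^(m+1)*N^(m+2) + (2*C_c*CC + C_f) * KK^m * N^(m+2)
                = (2*C_b*CC*KK^(m+1) + (2*C_c*CC + C_f) * KK^m) * N^(m+2) := by ring
              _ ≤ (CC * KK^(m+2)) * N^(m+2) := mul_le_mul_of_nonneg_right e1 hNm2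
              _ = CC * KK^(m+2) * N^(m+2) := by ring
          linarith [r1, r2, r3]
        exact le_trans step1 (le_trans step2 step3)
  intro n x hx
  exact le_trans (hMub n x hx) (key n)
end

section
/- There exist constants C, K > 0 and a complex open neighborhood G of [0,1], all depending only on b, c, f, such that b, c, f extend holomorphically to G with c nonvanishing on G, each u_{i,j} extends holomorphically to G, and for every δ > 0, every i, j ≥ 0, and every z ∈ G_δ := {z ∈ G : dist(z, ∂G) > δ}, the extension satisfies |u_{i,j}(z)| ≤ C δ^{−i} K^{i} i^{i} (with the convention 0⁰ := 1). -/
noncomputable def uS (b c f : ℝ → ℝ) : ℕ → ℕ → ℝ → ℝ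
  | 0, 0 => fun x => f x / c x
  | (i+1), 0 => fun x => -(b x / c x) * deriv (uS b c f i 0) x
  | 0, (_+1) => fun _ => 0
  | 1, (_+1) => fun _ => 0
  | (i+2), (j+1) => fun x =>
      (1 / c x) * (deriv (deriv (uS b c f i j)) x - b x * deriv (uS b c f (i+1) (j+1)) x)
  termination_by i j => (i, j)

/-!
Real analytic data extend holomorphically to a complex neighbourhood of `[0,1]`: the Taylor series
at each point converges on a complex disc, and the identity theorem glues the discs together. The
recursion for `u_{i,j}` then makes sense verbatim with complex derivatives. On an open `G ⊇ [0,1]`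
with compact closure inside the domain of holomorphy we have `‖B‖ ≤ Λ`, `‖C‖ ≥ γ` and
`‖F / C‖ ≤ A`, and by induction `‖u_{i,j} z‖ ≤ A X ^ i` as soon as `dist(z, ∂G) > M i / X`: each
derivative is estimated by Cauchy's inequality on a disc of radius `M / X`, which fits between two
consecutive levels and costs a factor `X / M`; choosing `Λ ≤ γ M` and `1 + Λ M ≤ γ M²` absorbs the
coefficients of the recursion. Taking `X = M i / δ` gives the bound with `K = M`.
-/

open Metric Set Complex Filter Topology

theorem AnalyticAt.exists_complex_extension {g : ℝ → ℝ} {x : ℝ} (hg : AnalyticAt ℝ g x) :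
    ∃ ρ > 0, ∃ h : ℂ → ℂ, AnalyticOnNhd ℂ h (ball (x : ℂ) ρ) ∧
      ∀ y : ℝ, dist y x < ρ → h y = g y := by
  obtain ⟨p, r, hp⟩ := hg
  set q : FormalMultilinearSeries ℂ ℂ ℂ := .ofScalars ℂ fun n => (p.coeff n : ℂ)
  have hqp : ∀ n, ‖q n‖ = ‖p n‖ := by
    simp [q, FormalMultilinearSeries.norm_apply_eq_norm_coef]
  have hr : r ≤ q.radius :=
    hp.r_le.trans <| FormalMultilinearSeries.radius_le_of_le (hqp · |>.le)
  have hq : HasFPowerSeriesOnBall (fun z => q.sum (z - x)) q x r := by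
    simpa using ((q.hasFPowerSeriesOnBall (hp.r_pos.trans_le hr)).mono hp.r_pos hr).comp_sub x
  obtain ⟨ρ, hρ, hρr⟩ : ∃ ρ : ℝ, 0 < ρ ∧ ENNReal.ofReal ρ < r := by
    obtain ⟨ρ, hρ, hρr⟩ := ENNReal.lt_iff_exists_nnreal_btwn.1 hp.r_pos
    exact ⟨ρ, by exact_mod_cast hρ, by simpa using hρr⟩
  have hball {E : Type} [PseudoMetricSpace E] (a : E) : ball a ρ ⊆ eball a r := by
    rw [← eball_ofReal]
    exact eball_subset_eball hρr.le
  refine ⟨ρ, hρ, _, fun z hz => hq.analyticAt_of_mem (hball _ hz), fun y hy => ?_⟩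
  have hyx : ‖y - x‖ < ρ := by rwa [← dist_eq_norm]
  have hyx' : ‖((y - x : ℝ) : ℂ)‖ < ρ := by rwa [norm_real]
  have hreal := ofRealCLM.hasSum (hp.hasSum (hball _ (mem_ball_zero_iff.2 hyx)))
  have hcpx := hq.hasSum (hball _ (mem_ball_zero_iff.2 hyx'))
  rw [add_sub_cancel] at hreal
  rw [add_sub_cancel_left] at hcpx
  rw [← ofReal_sub]
  refine hcpx.unique (hreal.congr_fun fun n => ?_)
  simp [q]

theorem AnalyticOnNhd.eqOn_of_eq_ofReal {U : Set ℂ} {h h' : ℂ → ℂ}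
    (hh : AnalyticOnNhd ℂ h U) (hh' : AnalyticOnNhd ℂ h' U) (hU : IsOpen U)
    (hUc : IsPreconnected U) {y₀ : ℝ} (hy₀ : (y₀ : ℂ) ∈ U)
    (heq : ∀ y : ℝ, (y : ℂ) ∈ U → h y = h' y) : EqOn h h' U := by
  refine hh.eqOn_of_preconnected_of_frequently_eq hh' hUc hy₀ ?_
  have hreal : ∀ᶠ y : ℝ in 𝓝[≠] y₀, h y = h' y :=
    eventually_nhdsWithin_of_eventually_nhds <|
      mem_of_superset (continuous_ofReal.continuousAt.preimage_mem_nhds (hU.mem_nhds hy₀)) heq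
  have htend : Tendsto ((↑) : ℝ → ℂ) (𝓝[≠] y₀) (𝓝[≠] (y₀ : ℂ)) :=
    tendsto_nhdsWithin_of_tendsto_nhds_of_eventually_within _
      (continuous_ofReal.continuousAt.tendsto.mono_left nhdsWithin_le_nhds)
      (eventually_nhdsWithin_of_forall fun _ hy => ofReal_injective.ne hy)
  exact htend.frequently hreal.frequently

theorem ofReal_re_mem_ball {z : ℂ} {x ρ : ℝ} (hz : z ∈ ball (x : ℂ) ρ) :
    (z.re : ℂ) ∈ ball (x : ℂ) ρ := by
  rw [mem_ball_iff_norm] at hz ⊢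
  calc ‖(z.re : ℂ) - x‖ = |(z - x).re| := by simp [← ofReal_sub, norm_real]
    _ ≤ ‖z - x‖ := abs_re_le_norm _
    _ < ρ := hz

theorem eqOn_inter_ball_of_eq_ofReal {g : ℝ → ℝ} {x x' ρ ρ' : ℝ} {h h' : ℂ → ℂ}
    (hh : AnalyticOnNhd ℂ h (ball (x : ℂ) ρ)) (hh' : AnalyticOnNhd ℂ h' (ball (x' : ℂ) ρ'))
    (hg : ∀ y : ℝ, dist y x < ρ → h y = g y) (hg' : ∀ y : ℝ, dist y x' < ρ' → h' y = g y) :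
    EqOn h h' (ball (x : ℂ) ρ ∩ ball (x' : ℂ) ρ') := by
  intro z hz
  have hmem : ∀ y : ℝ, (y : ℂ) ∈ ball (x : ℂ) ρ ∩ ball (x' : ℂ) ρ' →
      dist y x < ρ ∧ dist y x' < ρ' := fun y hy => by
    simpa [isometry_ofReal.dist_eq] using hy
  refine (hh.mono inter_subset_left).eqOn_of_eq_ofReal (hh'.mono inter_subset_right)
    (isOpen_ball.inter isOpen_ball) ((convex_ball _ _).inter (convex_ball _ _)).isPreconnected
    ⟨ofReal_re_mem_ball hz.1, ofReal_re_mem_ball hz.2⟩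
    (fun y hy => by rw [hg y (hmem y hy).1, hg' y (hmem y hy).2]) hz

theorem AnalyticOnNhd.exists_complex_extension {s : Set ℝ} {g : ℝ → ℝ}
    (hg : AnalyticOnNhd ℝ g s) :
    ∃ U : Set ℂ, IsOpen U ∧ ofReal '' s ⊆ U ∧
      ∃ h : ℂ → ℂ, DifferentiableOn ℂ h U ∧ ∀ y : ℝ, (y : ℂ) ∈ U → h y = g y := by
  choose! ρ hρ h hh hhg using fun x hx => (hg x hx).exists_complex_extension
  classical
  let H : ℂ → ℂ := fun z => if hz : ∃ x ∈ s, z ∈ ball (x : ℂ) (ρ x) then h hz.choose z else 0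
  have hH : ∀ x ∈ s, EqOn H (h x) (ball (x : ℂ) (ρ x)) := by
    intro x hx z hz
    have hz' : ∃ x ∈ s, z ∈ ball (x : ℂ) (ρ x) := ⟨x, hx, hz⟩
    obtain ⟨hxs, hzx⟩ := hz'.choose_spec
    simp only [H, dif_pos hz']
    exact eqOn_inter_ball_of_eq_ofReal (hh _ hxs) (hh x hx) (hhg _ hxs) (hhg x hx) ⟨hzx, hz⟩
  refine ⟨⋃ x ∈ s, ball (x : ℂ) (ρ x), isOpen_biUnion fun _ _ => isOpen_ball, ?_, H, ?_, ?_⟩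
  · rintro _ ⟨x, hx, rfl⟩
    exact mem_biUnion hx (mem_ball_self (hρ x hx))
  · intro z hz
    obtain ⟨x, hx, hzx⟩ := mem_iUnion₂.1 hz
    have hHx : H =ᶠ[𝓝 z] h x := eventuallyEq_of_mem (isOpen_ball.mem_nhds hzx) (hH x hx)
    exact ((hh x hx z hzx).congr hHx.symm).differentiableAt.differentiableWithinAt
  · intro y hy
    obtain ⟨x, hx, hyx⟩ := mem_iUnion₂.1 hy
    rw [hH x hx hyx, hhg x hx y (by simpa [isometry_ofReal.dist_eq] using hyx)]

theorem exists_common_complex_extension {s : Set ℝ} {b c f : ℝ → ℝ} {γ : ℝ}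
    (hb : AnalyticOnNhd ℝ b s) (hc : AnalyticOnNhd ℝ c s) (hf : AnalyticOnNhd ℝ f s)
    (hcγ : ∀ x ∈ s, γ ≤ c x) (hγ : 0 < γ) :
    ∃ V : Set ℂ, IsOpen V ∧ ofReal '' s ⊆ V ∧ ∃ B Cc F : ℂ → ℂ,
      DifferentiableOn ℂ B V ∧ DifferentiableOn ℂ Cc V ∧ DifferentiableOn ℂ F V ∧
      (∀ y : ℝ, (y : ℂ) ∈ V → B y = b y ∧ Cc y = c y ∧ F y = f y) ∧
      ∀ z ∈ V, γ / 2 ≤ ‖Cc z‖ := by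
  obtain ⟨Ub, hUb, hsUb, B, hB, hBb⟩ := hb.exists_complex_extension
  obtain ⟨Uc, hUc, hsUc, Cc, hC, hCc⟩ := hc.exists_complex_extension
  obtain ⟨Uf, hUf, hsUf, F, hF, hFf⟩ := hf.exists_complex_extension
  refine ⟨Ub ∩ Uf ∩ (Uc ∩ (‖Cc ·‖) ⁻¹' Ioi (γ / 2)),
    (hUb.inter hUf).inter (hC.continuousOn.norm.isOpen_inter_preimage hUc isOpen_Ioi), ?_,
    B, Cc, F, hB.mono fun z hz => hz.1.1, hC.mono fun z hz => hz.2.1, hF.mono fun z hz => hz.1.2,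
    fun y hy => ⟨hBb y hy.1.1, hCc y hy.2.1, hFf y hy.1.2⟩, fun z hz => hz.2.2.le⟩
  rintro _ ⟨x, hx, rfl⟩
  have hxc : (x : ℂ) ∈ Uc := hsUc ⟨x, hx, rfl⟩
  refine ⟨⟨hsUb ⟨x, hx, rfl⟩, hsUf ⟨x, hx, rfl⟩⟩, hxc, ?_⟩
  have hcx := hcγ x hx
  simp only [mem_preimage, mem_Ioi, hCc x hxc, norm_real, Real.norm_eq_abs]
  rw [abs_of_pos (by linarith)]
  linarith

theorem norm_deriv_le_of_lt_infDist {h : ℂ → ℂ} {Ω : Set ℂ} (hh : DifferentiableOn ℂ h Ω)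
    {t d N : ℝ} (ht : 0 ≤ t) (hd : 0 < d) (hN : ∀ w, t < infDist w Ωᶜ → ‖h w‖ ≤ N)
    {z : ℂ} (hz : t + d < infDist z Ωᶜ) : ‖deriv h z‖ ≤ N / d := by
  have hball : ∀ w ∈ closedBall z d, t < infDist w Ωᶜ := fun w hw => by
    linarith [infDist_le_infDist_add_dist (s := Ωᶜ) (x := z) (y := w), mem_closedBall'.1 hw]
  have hΩ : closedBall z d ⊆ Ω := fun w hw =>
    ball_infDist_compl_subset (mem_ball_self (ht.trans_lt (hball w hw)))
  refine norm_deriv_le_of_forall_mem_sphere_norm_le hd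
    ⟨hh.mono (ball_subset_closedBall.trans hΩ), ?_⟩
    fun w hw => hN w (hball w (sphere_subset_closedBall hw))
  rw [closure_ball z hd.ne']
  exact hh.continuousOn.mono hΩ

theorem deriv_ofReal_of_eq {h : ℂ → ℂ} {g : ℝ → ℝ} {Ω : Set ℂ} (hΩ : IsOpen Ω)
    (hh : DifferentiableOn ℂ h Ω) (hg : ∀ y : ℝ, (y : ℂ) ∈ Ω → h y = g y)
    {y : ℝ} (hy : (y : ℂ) ∈ Ω) : deriv h y = deriv g y := by
  have hD : HasDerivAt h (deriv h y) y := (hh.differentiableAt (hΩ.mem_nhds hy)).hasDerivAt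
  have heq : (fun t : ℝ => h t) =ᶠ[𝓝 y] fun t => (g t : ℂ) :=
    mem_of_superset (continuous_ofReal.continuousAt.preimage_mem_nhds (hΩ.mem_nhds hy)) hg
  have hgD : HasDerivAt g (deriv h y).re y :=
    hD.real_of_complex.congr_of_eventuallyEq (heq.symm.fun_comp re)
  rw [hgD.deriv]
  exact (hD.comp_ofReal.congr_of_eventuallyEq heq.symm).unique hgD.ofReal_comp

noncomputable def uComplex (B Cc F : ℂ → ℂ) : ℕ → ℕ → ℂ → ℂ
  | 0, 0 => fun z => F z / Cc z
  | (i+1), 0 => fun z => -(B z / Cc z) * deriv (uComplex B Cc F i 0) z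
  | 0, (_+1) => fun _ => 0
  | 1, (_+1) => fun _ => 0
  | (i+2), (j+1) => fun z =>
      (1 / Cc z) * (deriv (deriv (uComplex B Cc F i j)) z
        - B z * deriv (uComplex B Cc F (i+1) (j+1)) z)
  termination_by i j => (i, j)

section UComplex

variable {B Cc F : ℂ → ℂ} {Ω : Set ℂ} (hΩ : IsOpen Ω) (hB : DifferentiableOn ℂ B Ω)
  (hC : DifferentiableOn ℂ Cc Ω) (hF : DifferentiableOn ℂ F Ω)
include hΩ hB hC hF

theorem differentiableOn_uComplex (hC0 : ∀ z ∈ Ω, Cc z ≠ 0) :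
    ∀ i j, DifferentiableOn ℂ (uComplex B Cc F i j) Ω
  | 0, 0 => by simp only [uComplex]; exact hF.div hC hC0
  | i + 1, 0 => by
    simp only [uComplex]
    exact (hB.div hC hC0).neg.mul ((differentiableOn_uComplex hC0 i 0).deriv hΩ)
  | 0, _ + 1 | 1, _ + 1 => by simp only [uComplex]; exact differentiableOn_const 0
  | i + 2, j + 1 => by
    have hij := (differentiableOn_uComplex hC0 i j).deriv hΩ
    have hsucc := (differentiableOn_uComplex hC0 (i + 1) (j + 1)).deriv hΩ
    simp only [uComplex]
    exact ((differentiableOn_const 1).div hC hC0).mul ((hij.deriv hΩ).sub (hB.mul hsucc))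

theorem uComplex_ofReal {b c f : ℝ → ℝ} (hC0 : ∀ z ∈ Ω, Cc z ≠ 0)
    (hb : ∀ y : ℝ, (y : ℂ) ∈ Ω → B y = b y) (hc : ∀ y : ℝ, (y : ℂ) ∈ Ω → Cc y = c y)
    (hf : ∀ y : ℝ, (y : ℂ) ∈ Ω → F y = f y) :
    ∀ i j, ∀ y : ℝ, (y : ℂ) ∈ Ω → uComplex B Cc F i j y = uS b c f i j y
  | 0, 0, y, hy => by simp only [uComplex, uS, hf y hy, hc y hy, ofReal_div]
  | i + 1, 0, y, hy => by
    have hd := deriv_ofReal_of_eq hΩ (differentiableOn_uComplex hΩ hB hC hF hC0 i 0)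
      (uComplex_ofReal hC0 hb hc hf i 0) hy
    simp only [uComplex, uS, hb y hy, hc y hy, hd]
    push_cast
    ring
  | 0, _ + 1, y, _ | 1, _ + 1, y, _ => by simp only [uComplex, uS, ofReal_zero]
  | i + 2, j + 1, y, hy => by
    have hdiff := differentiableOn_uComplex hΩ hB hC hF hC0
    have hd : ∀ w : ℝ, (w : ℂ) ∈ Ω → _ := fun w hw =>
      deriv_ofReal_of_eq hΩ (hdiff i j) (uComplex_ofReal hC0 hb hc hf i j) hw
    have hdd := deriv_ofReal_of_eq hΩ ((hdiff i j).deriv hΩ) hd hy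
    have hd' := deriv_ofReal_of_eq hΩ (hdiff (i + 1) (j + 1))
      (uComplex_ofReal hC0 hb hc hf (i + 1) (j + 1)) hy
    simp only [uComplex, uS, hb y hy, hc y hy, hdd, hd']
    push_cast
    ring

variable {Λ γ A M : ℝ} (hγ : 0 < γ) (hM : 0 < M) (hBΛ : ∀ z ∈ Ω, ‖B z‖ ≤ Λ)
  (hCγ : ∀ z ∈ Ω, γ ≤ ‖Cc z‖) (hFA : ∀ z ∈ Ω, ‖F z / Cc z‖ ≤ A)
  (hΛM : Λ ≤ γ * M) (hM2 : 1 + Λ * M ≤ γ * M ^ 2)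
include hγ hM hBΛ hCγ hFA hΛM hM2

theorem norm_uComplex_le_mul_pow {X : ℝ} (hX : 0 < X) :
    ∀ i j : ℕ, ∀ z : ℂ, M * i / X < infDist z Ωᶜ → ‖uComplex B Cc F i j z‖ ≤ A * X ^ i := by
  have hC0 : ∀ z ∈ Ω, Cc z ≠ 0 := fun z hz => norm_pos_iff.1 (hγ.trans_le (hCγ z hz))
  have hdiff := differentiableOn_uComplex hΩ hB hC hF hC0
  have hlevel : ∀ n : ℕ, M * n / X + M / X = M * (n + 1 : ℕ) / X := fun n => by
    push_cast
    ring
  intro i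
  induction i using Nat.strong_induction_on with
  | _ i IH =>
  intro j z hz
  have hzΩ : z ∈ Ω :=
    ball_infDist_compl_subset (mem_ball_self ((by positivity : 0 ≤ M * i / X).trans_lt hz))
  have hA : 0 ≤ A := (norm_nonneg _).trans (hFA z hzΩ)
  have hΛ : 0 ≤ Λ := (norm_nonneg _).trans (hBΛ z hzΩ)
  match i, j with
  | 0, 0 => simpa only [uComplex, pow_zero, mul_one] using hFA z hzΩ
  | 0, _ + 1 => simp only [uComplex, norm_zero, pow_zero, mul_one]; exact hA
  | 1, _ + 1 => simp only [uComplex, norm_zero]; positivity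
  | i + 1, 0 =>
    have hd : ‖deriv (uComplex B Cc F i 0) z‖ ≤ A * X ^ i / (M / X) :=
      norm_deriv_le_of_lt_infDist (hdiff i 0) (by positivity) (by positivity)
        (IH i (by omega) 0) (by rwa [hlevel])
    calc ‖uComplex B Cc F (i + 1) 0 z‖
        = ‖B z‖ / ‖Cc z‖ * ‖deriv (uComplex B Cc F i 0) z‖ := by
          simp only [uComplex, norm_mul, norm_neg, norm_div]
      _ ≤ Λ / γ * (A * X ^ i / (M / X)) := by
          gcongr
          exacts [hBΛ z hzΩ, hCγ z hzΩ]
      _ = A * X ^ (i + 1) * (Λ / (γ * M)) := by field_simp; ring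
      _ ≤ A * X ^ (i + 1) := by
          apply mul_le_of_le_one_right (by positivity)
          rwa [div_le_one (by positivity)]
  | i + 2, j + 1 =>
    have hd : ‖deriv (uComplex B Cc F (i + 1) (j + 1)) z‖ ≤ A * X ^ (i + 1) / (M / X) :=
      norm_deriv_le_of_lt_infDist (hdiff (i + 1) (j + 1)) (by positivity) (by positivity)
        (IH (i + 1) (by omega) (j + 1)) (by rwa [hlevel])
    have hd' : ∀ w, M * (i + 1 : ℕ) / X < infDist w Ωᶜ →
        ‖deriv (uComplex B Cc F i j) w‖ ≤ A * X ^ i / (M / X) := fun w hw =>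
      norm_deriv_le_of_lt_infDist (hdiff i j) (by positivity) (by positivity)
        (IH i (by omega) j) (by rwa [hlevel])
    have hdd : ‖deriv (deriv (uComplex B Cc F i j)) z‖ ≤ A * X ^ i / (M / X) / (M / X) :=
      norm_deriv_le_of_lt_infDist ((hdiff i j).deriv hΩ) (by positivity) (by positivity)
        hd' (by rwa [hlevel])
    calc ‖uComplex B Cc F (i + 2) (j + 1) z‖
        = ‖deriv (deriv (uComplex B Cc F i j)) z
            - B z * deriv (uComplex B Cc F (i + 1) (j + 1)) z‖ / ‖Cc z‖ := by
          simp only [uComplex, norm_mul, norm_div, norm_one]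
          ring
      _ ≤ (A * X ^ i / (M / X) / (M / X) + Λ * (A * X ^ (i + 1) / (M / X))) / γ := by
          gcongr
          · refine (norm_sub_le _ _).trans (add_le_add hdd ?_)
            rw [norm_mul]
            gcongr
            exact hBΛ z hzΩ
          · exact hCγ z hzΩ
      _ = A * X ^ (i + 2) * ((1 + Λ * M) / (γ * M ^ 2)) := by field_simp; ring
      _ ≤ A * X ^ (i + 2) := by
          apply mul_le_of_le_one_right (by positivity)
          rwa [div_le_one (by positivity)]

theorem norm_uComplex_le {δ : ℝ} (hδ : 0 < δ) (i j : ℕ) {z : ℂ} (hz : δ < infDist z Ωᶜ) :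
    ‖uComplex B Cc F i j z‖ ≤ A * δ⁻¹ ^ i * M ^ i * (i : ℝ) ^ i := by
  have hbound {X : ℝ} (hX : 0 < X) :=
    norm_uComplex_le_mul_pow hΩ hB hC hF hγ hM hBΛ hCγ hFA hΛM hM2 hX
  rcases Nat.eq_zero_or_pos i with rfl | hi
  · simpa using hbound one_pos 0 j z (by simpa using hδ.trans hz)
  · have hMi : M * i ≠ 0 := by positivity
    calc ‖uComplex B Cc F i j z‖ ≤ A * (M * i / δ) ^ i :=
          hbound (by positivity) i j z (by rwa [div_div_cancel₀ hMi])
      _ = A * δ⁻¹ ^ i * M ^ i * (i : ℝ) ^ i := by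
          rw [div_eq_mul_inv, mul_pow, mul_pow]
          ring

end UComplex

theorem exists_isOpen_norm_uComplex_le {S V : Set ℂ} (hS : IsCompact S) (hV : IsOpen V)
    (hSV : S ⊆ V) {B Cc F : ℂ → ℂ} (hB : DifferentiableOn ℂ B V) (hC : DifferentiableOn ℂ Cc V)
    (hF : DifferentiableOn ℂ F V) {γ : ℝ} (hγ : 0 < γ) (hCγ : ∀ z ∈ V, γ ≤ ‖Cc z‖) :
    ∃ C K : ℝ, 0 < C ∧ 0 < K ∧ ∃ G : Set ℂ, IsOpen G ∧ S ⊆ G ∧ G ⊆ V ∧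
      ∀ δ : ℝ, 0 < δ → ∀ i j : ℕ, ∀ z : ℂ, δ < infDist z Gᶜ →
        ‖uComplex B Cc F i j z‖ ≤ C * δ⁻¹ ^ i * K ^ i * (i : ℝ) ^ i := by
  obtain ⟨G, hG, hSG, hGV, hGc⟩ := exists_open_between_and_isCompact_closure hS hV hSV
  have hC0 : ∀ z ∈ V, Cc z ≠ 0 := fun z hz => norm_pos_iff.1 (hγ.trans_le (hCγ z hz))
  obtain ⟨Λ, hΛ⟩ := hGc.exists_bound_of_continuousOn (hB.continuousOn.mono hGV)
  obtain ⟨A, hA⟩ := hGc.exists_bound_of_continuousOn ((hF.div hC hC0).continuousOn.mono hGV)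
  set M := max 1 ((1 + Λ) / γ)
  have hM1 : 1 ≤ M := le_max_left _ _
  have hγM : 1 + Λ ≤ γ * M := by
    rw [← div_le_iff₀' hγ]
    exact le_max_right _ _
  have hGV' : G ⊆ V := subset_closure.trans hGV
  refine ⟨max A 1, M, by positivity, by positivity, G, hG, hSG, hGV', fun δ hδ i j z hz => ?_⟩
  exact norm_uComplex_le hG (hB.mono hGV') (hC.mono hGV') (hF.mono hGV') hγ (by positivity)
    (fun z hz => hΛ z (subset_closure hz)) (fun z hz => hCγ z (hGV' hz))
    (fun z hz => (hA z (subset_closure hz)).trans (le_max_left _ _)) (by linarith)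
    (by nlinarith) hδ i j hz

theorem stmt_5_general
    (b c f : ℝ → ℝ) (γ : ℝ)
    (hγ : 0 < γ)
    (hban : AnalyticOnNhd ℝ b (Set.Icc 0 1))
    (hcan : AnalyticOnNhd ℝ c (Set.Icc 0 1))
    (hfan : AnalyticOnNhd ℝ f (Set.Icc 0 1))
    (hclow : ∀ x ∈ Set.Icc (0:ℝ) 1, γ ≤ c x)
 :
    ∃ C K : ℝ, 0 < C ∧ 0 < K ∧
    ∃ G : Set ℂ, IsOpen G ∧ (Complex.ofReal '' Set.Icc (0:ℝ) 1) ⊆ G ∧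
    ∃ B Cc F : ℂ → ℂ,
      DifferentiableOn ℂ B G ∧ DifferentiableOn ℂ Cc G ∧ DifferentiableOn ℂ F G ∧
      (∀ x ∈ Set.Icc (0:ℝ) 1, B x = b x ∧ Cc x = c x ∧ F x = f x) ∧
      (∀ z ∈ G, Cc z ≠ 0) ∧
    ∃ U : ℕ → ℕ → ℂ → ℂ,
      (∀ i j : ℕ, DifferentiableOn ℂ (U i j) G) ∧
      (∀ i j : ℕ, ∀ x ∈ Set.Icc (0:ℝ) 1, U i j x = uS b c f i j x) ∧
      (∀ δ : ℝ, 0 < δ → ∀ i j : ℕ, ∀ z ∈ G, δ < Metric.infDist z Gᶜ →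
        ‖U i j z‖ ≤ C * δ⁻¹ ^ i * K ^ i * (i:ℝ) ^ i) := by
  obtain ⟨V, hV, hIV, B, Cc, F, hB, hC, hF, hreal, hCγ⟩ :=
    exists_common_complex_extension hban hcan hfan hclow hγ
  obtain ⟨C, K, hC0, hK0, G, hG, hIG, hGV, hbound⟩ :=
    exists_isOpen_norm_uComplex_le (isCompact_Icc.image continuous_ofReal) hV hIV hB hC hF
      (half_pos hγ) hCγ
  have hCne : ∀ z ∈ G, Cc z ≠ 0 := fun z hz =>
    norm_pos_iff.1 ((half_pos hγ).trans_le (hCγ z (hGV hz)))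
  have hrealG : ∀ y : ℝ, (y : ℂ) ∈ G → B y = b y ∧ Cc y = c y ∧ F y = f y :=
    fun y hy => hreal y (hGV hy)
  refine ⟨C, K, hC0, hK0, G, hG, hIG, B, Cc, F, hB.mono hGV, hC.mono hGV, hF.mono hGV,
    fun x hx => hrealG x (hIG ⟨x, hx, rfl⟩), hCne, uComplex B Cc F,
    differentiableOn_uComplex hG (hB.mono hGV) (hC.mono hGV) (hF.mono hGV) hCne,
    fun i j x hx => ?_, fun δ hδ i j z _ hz => hbound δ hδ i j z hz⟩
  exact uComplex_ofReal hG (hB.mono hGV) (hC.mono hGV) (hF.mono hGV) hCne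
    (fun y hy => (hrealG y hy).1) (fun y hy => (hrealG y hy).2.1) (fun y hy => (hrealG y hy).2.2)
    i j x (hIG ⟨x, hx, rfl⟩)

theorem stmt_5
    (b c f : ℝ → ℝ) (C_b C_c C_f γ_b γ_c γ_f β γ : ℝ)
    (hCb : 0 < C_b) (hCc : 0 < C_c) (hCf : 0 < C_f)
    (hgb : 0 < γ_b) (hgc : 0 < γ_c) (hgf : 0 < γ_f)
    (hβ : 0 < β) (hγ : 0 < γ)
    (hban : AnalyticOnNhd ℝ b (Set.Icc 0 1))
    (hcan : AnalyticOnNhd ℝ c (Set.Icc 0 1))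
    (hfan : AnalyticOnNhd ℝ f (Set.Icc 0 1))
    (hbb : ∀ n : ℕ, ∀ x ∈ Set.Icc (0:ℝ) 1, |iteratedDeriv n b x| ≤ C_b * n.factorial * γ_b ^ n)
    (hcb : ∀ n : ℕ, ∀ x ∈ Set.Icc (0:ℝ) 1, |iteratedDeriv n c x| ≤ C_c * n.factorial * γ_c ^ n)
    (hfb : ∀ n : ℕ, ∀ x ∈ Set.Icc (0:ℝ) 1, |iteratedDeriv n f x| ≤ C_f * n.factorial * γ_f ^ n)
    (hblow : ∀ x ∈ Set.Icc (0:ℝ) 1, β ≤ b x)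
    (hclow : ∀ x ∈ Set.Icc (0:ℝ) 1, γ ≤ c x)
 :
    ∃ C K : ℝ, 0 < C ∧ 0 < K ∧
    ∃ G : Set ℂ, IsOpen G ∧ (Complex.ofReal '' Set.Icc (0:ℝ) 1) ⊆ G ∧
    ∃ B Cc F : ℂ → ℂ,
      DifferentiableOn ℂ B G ∧ DifferentiableOn ℂ Cc G ∧ DifferentiableOn ℂ F G ∧
      (∀ x ∈ Set.Icc (0:ℝ) 1, B x = b x ∧ Cc x = c x ∧ F x = f x) ∧
      (∀ z ∈ G, Cc z ≠ 0) ∧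
    ∃ U : ℕ → ℕ → ℂ → ℂ,
      (∀ i j : ℕ, DifferentiableOn ℂ (U i j) G) ∧
      (∀ i j : ℕ, ∀ x ∈ Set.Icc (0:ℝ) 1, U i j x = uS b c f i j x) ∧
      (∀ δ : ℝ, 0 < δ → ∀ i j : ℕ, ∀ z ∈ G, δ < Metric.infDist z Gᶜ →
        ‖U i j z‖ ≤ C * δ⁻¹ ^ i * K ^ i * (i:ℝ) ^ i) :=
  stmt_5_general b c f γ hγ hban hcan hfan hclow
end

section
/- There exist constants C, K₁, K₂ > 0 depending only on b, c, f such that ‖u_{i,j}⁽ⁿ⁾‖_{∞,I} ≤ C n! K₁^{n} i! K₂^{i} for all n, i, j ≥ 0. -/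
/-!
Fix `x ∈ [0,1]`; everything is then a statement about the numbers `φ⁽ᵏ⁾(x)`. Say that `φ` has
rate `K` and shift `m` if `|φ⁽ᵏ⁾(x)| ≤ C Kᵏ (k + m)!` for all `k`. By the Leibniz rule, multiplying
by a function with Cauchy bounds of rate `p ≤ K/2` keeps rate `K` and shift `m` at the cost of a
factor `2`: the binomial-factorial sum is dominated by the geometric series `∑ (p/K)ᵏ`. Taking
`n` derivatives of `c · c⁻¹ = 1` gives Cauchy bounds for `1/c`. In the recursion for `u_{i,j}`
every derivative is paid for by a unit increase of `i`, so induction on `i` (uniformly in `j`)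
gives `|u_{i,j}⁽ⁿ⁾(x)| ≤ A Tⁱ Kⁿ (n + i)!`, and `(n + i)! ≤ 2ⁿ⁺ⁱ n! i!` splits the factorial.
-/

open Finset
open scoped Nat ContDiff Topology

theorem Nat.choose_mul_factorial_mul_factorial_add_le {n k : ℕ} (hk : k ≤ n) (m : ℕ) :
    n.choose k * k ! * (n - k + m)! ≤ (n + m)! := by
  have h := Nat.choose_mul_factorial_mul_factorial (n := n + m) (k := k) (by omega)
  rw [show n + m - k = n - k + m by omega] at h
  rw [← h]
  gcongr
  omega

theorem Nat.factorial_add_le_two_pow_mul (n m : ℕ) : (n + m)! ≤ 2 ^ (n + m) * n ! * m ! := by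
  rw [← Nat.add_choose_mul_factorial_mul_factorial n m]
  gcongr
  exact Nat.choose_le_two_pow _ _

theorem sum_pow_mul_pow_sub_le_two_mul {p K : ℝ} (hp : 0 ≤ p) (hK : 0 < K) (hpK : 2 * p ≤ K)
    (n : ℕ) : ∑ k ∈ range (n + 1), p ^ k * K ^ (n - k) ≤ 2 * K ^ n := by
  have hgeom := geom_sum₂_mul p K (n + 1)
  simp only [Nat.add_sub_cancel] at hgeom
  have hKp : 0 < K - p := by linarith
  refine le_of_mul_le_mul_right ?_ hKp
  have : 0 ≤ p ^ (n + 1) := by positivity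
  have : 0 ≤ K ^ n := by positivity
  nlinarith [pow_succ K n]

theorem mul_iteratedDeriv_succ_inv {c : ℝ → ℝ} {x : ℝ} (hc : ContDiffAt ℝ ∞ c x)
    (hcx : c x ≠ 0) (m : ℕ) :
    c x * iteratedDeriv (m + 1) (fun y => (c y)⁻¹) x = -∑ k ∈ range (m + 1),
      ((m + 1).choose (k + 1) : ℝ) * iteratedDeriv (k + 1) c x
        * iteratedDeriv (m - k) (fun y => (c y)⁻¹) x := by
  have hcc : (fun y => c y * (c y)⁻¹) =ᶠ[𝓝 x] fun _ => 1 :=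
    (hc.continuousAt.eventually_ne hcx).mono fun y hy => mul_inv_cancel₀ hy
  have hinv : ContDiffAt ℝ ∞ (fun y => (c y)⁻¹) x := hc.inv hcx
  have h := (iteratedDeriv_fun_mul (hc.of_le (by exact_mod_cast le_top))
    (hinv.of_le (by exact_mod_cast le_top))).symm.trans (hcc.iteratedDeriv_eq (m + 1))
  rw [iteratedDeriv_const, sum_range_succ'] at h
  simp only [Nat.add_sub_add_right, Nat.choose_zero_right, Nat.cast_one, one_mul,
    iteratedDeriv_zero, Nat.sub_zero, Nat.add_one_ne_zero, if_false] at h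
  linarith

def IteratedDerivBound (u : ℝ → ℝ) (x C K : ℝ) (m : ℕ) : Prop :=
  ∀ k : ℕ, |iteratedDeriv k u x| ≤ C * K ^ k * (k + m)!

namespace IteratedDerivBound

variable {u v c : ℝ → ℝ} {x C C' K K' P p Q q γ : ℝ} {m : ℕ}

theorem of_factorial_mul_pow (h : ∀ k : ℕ, |iteratedDeriv k u x| ≤ C * k ! * K ^ k) :
    IteratedDerivBound u x C K 0 :=
  fun k => (h k).trans_eq (by rw [add_zero]; ring)

theorem _root_.iteratedDerivBound_zero (hC : 0 ≤ C) (hK : 0 ≤ K) :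
    IteratedDerivBound (fun _ => 0) x C K m := fun k => by
  rw [iteratedDeriv_const]
  split_ifs <;> simp only [abs_zero] <;> positivity

theorem nonneg (h : IteratedDerivBound u x C K m) : 0 ≤ C := by
  have h0 := (abs_nonneg _).trans (h 0)
  rw [pow_zero, mul_one, zero_add] at h0
  exact nonneg_of_mul_nonneg_left h0 (by positivity)

theorem mono (h : IteratedDerivBound u x C K m) (hC : C ≤ C') (hK : 0 ≤ K) (hKK' : K ≤ K') :
    IteratedDerivBound u x C' K' m := fun k =>
  (h k).trans <| by
    have : 0 ≤ C' := h.nonneg.trans hC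
    gcongr

theorem neg (h : IteratedDerivBound u x C K m) :
    IteratedDerivBound (fun y => -u y) x C K m := fun k => by
  simpa only [iteratedDeriv_fun_neg, abs_neg] using h k

theorem sub (hu : ContDiffAt ℝ ∞ u x) (hv : ContDiffAt ℝ ∞ v x)
    (hub : IteratedDerivBound u x C K m) (hvb : IteratedDerivBound v x C' K m) :
    IteratedDerivBound (fun y => u y - v y) x (C + C') K m := fun k => by
  rw [iteratedDeriv_fun_sub (hu.of_le (by exact_mod_cast le_top))
    (hv.of_le (by exact_mod_cast le_top))]
  calc _ ≤ |iteratedDeriv k u x| + |iteratedDeriv k v x| := abs_sub _ _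
    _ ≤ C * K ^ k * (k + m)! + C' * K ^ k * (k + m)! := add_le_add (hub k) (hvb k)
    _ = _ := by ring

theorem mul (hu : ContDiffAt ℝ ∞ u x) (hv : ContDiffAt ℝ ∞ v x)
    (hub : IteratedDerivBound u x P p 0) (hvb : IteratedDerivBound v x Q K m)
    (hp : 0 ≤ p) (hK : 0 < K) (hpK : 2 * p ≤ K) :
    IteratedDerivBound (fun y => u y * v y) x (2 * P * Q) K m := fun n => by
  have hP := hub.nonneg
  have hPQ : 0 ≤ P * Q := mul_nonneg hP hvb.nonneg
  have hterm : ∀ k ∈ range (n + 1),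
      |(n.choose k : ℝ) * iteratedDeriv k u x * iteratedDeriv (n - k) v x|
        ≤ P * Q * (n + m)! * (p ^ k * K ^ (n - k)) := by
    intro k hk
    have hfact : (n.choose k * k ! * (n - k + m)! : ℝ) ≤ (n + m)! := by
      exact_mod_cast Nat.choose_mul_factorial_mul_factorial_add_le
        (Nat.lt_succ_iff.mp (mem_range.mp hk)) m
    rw [abs_mul, abs_mul, Nat.abs_cast]
    calc _ ≤ n.choose k * (P * p ^ k * (k + 0)!) * (Q * K ^ (n - k) * (n - k + m)!) := by
          gcongr
          exacts [hub k, hvb (n - k)]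
      _ = P * Q * (p ^ k * K ^ (n - k)) * (n.choose k * k ! * (n - k + m)!) := by
          rw [add_zero]; ring
      _ ≤ P * Q * (p ^ k * K ^ (n - k)) * (n + m)! := by gcongr
      _ = _ := by ring
  rw [iteratedDeriv_fun_mul (hu.of_le (by exact_mod_cast le_top))
    (hv.of_le (by exact_mod_cast le_top))]
  calc _ ≤ ∑ k ∈ range (n + 1),
          |(n.choose k : ℝ) * iteratedDeriv k u x * iteratedDeriv (n - k) v x| :=
        abs_sum_le_sum_abs _ _
    _ ≤ ∑ k ∈ range (n + 1), P * Q * (n + m)! * (p ^ k * K ^ (n - k)) := sum_le_sum hterm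
    _ = P * Q * (n + m)! * ∑ k ∈ range (n + 1), p ^ k * K ^ (n - k) := by rw [mul_sum]
    _ ≤ P * Q * (n + m)! * (2 * K ^ n) := by
        gcongr
        exact sum_pow_mul_pow_sub_le_two_mul hp hK hpK n
    _ = _ := by ring

/-- Proof by strong induction via `mul_iteratedDeriv_succ_inv`: with `δ = 2p + 2Cp/γ`,
`2p ≤ δ` bounds the resulting sum by a geometric series and `2Cp/γ ≤ δ` absorbs its prefactor. -/
theorem inv (hc : ContDiffAt ℝ ∞ c x) (hcb : IteratedDerivBound c x C p 0) (hp : 0 < p)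
    (hγ : 0 < γ) (hcx : γ ≤ |c x|) :
    IteratedDerivBound (fun y => (c y)⁻¹) x γ⁻¹ (2 * p + 2 * C * p / γ) 0 := by
  set g : ℝ → ℝ := fun y => (c y)⁻¹
  set δ := 2 * p + 2 * C * p / γ
  have hC := hcb.nonneg
  have hCpγ : 2 * C * p / γ ≤ δ := le_add_of_nonneg_left (by positivity)
  have hpδ : 2 * p ≤ δ := le_add_of_nonneg_right (by positivity)
  have hc0 : c x ≠ 0 := abs_pos.mp (hγ.trans_le hcx)
  intro n
  induction n using Nat.strong_induction_on with
  | _ n ih =>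
  rcases n with _ | m
  · simpa [g, abs_inv] using inv_anti₀ hγ hcx
  have hterm : ∀ k ∈ range (m + 1),
      |((m + 1).choose (k + 1) : ℝ) * iteratedDeriv (k + 1) c x * iteratedDeriv (m - k) g x|
        ≤ C * p * γ⁻¹ * (m + 1)! * (p ^ k * δ ^ (m - k)) := by
    intro k hk
    have hfact : ((m + 1).choose (k + 1) * (k + 1)! * (m - k)! : ℝ) = (m + 1)! := by
      have := Nat.choose_mul_factorial_mul_factorial (n := m + 1) (k := k + 1)
        (by have := mem_range.mp hk; omega)
      rw [Nat.add_sub_add_right] at this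
      exact_mod_cast this
    rw [abs_mul, abs_mul, Nat.abs_cast]
    calc _ ≤ (m + 1).choose (k + 1) * (C * p ^ (k + 1) * (k + 1 + 0)!)
          * (γ⁻¹ * δ ^ (m - k) * (m - k + 0)!) := by
          gcongr
          exacts [hcb (k + 1), ih (m - k) (by omega)]
      _ = C * p * γ⁻¹ * (p ^ k * δ ^ (m - k))
          * ((m + 1).choose (k + 1) * (k + 1)! * (m - k)!) := by
          simp only [add_zero]; ring
      _ = _ := by rw [hfact]; ring
  have hγg : γ * |iteratedDeriv (m + 1) g x| ≤ 2 * C * p / γ * (m + 1)! * δ ^ m :=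
    calc γ * |iteratedDeriv (m + 1) g x|
        ≤ |c x| * |iteratedDeriv (m + 1) g x| := by gcongr
      _ = |∑ k ∈ range (m + 1),
          ((m + 1).choose (k + 1) : ℝ) * iteratedDeriv (k + 1) c x
            * iteratedDeriv (m - k) g x| := by
          rw [← abs_mul, mul_iteratedDeriv_succ_inv hc hc0, abs_neg]
      _ ≤ ∑ k ∈ range (m + 1), C * p * γ⁻¹ * (m + 1)! * (p ^ k * δ ^ (m - k)) :=
          (abs_sum_le_sum_abs _ _).trans (sum_le_sum hterm)
      _ ≤ C * p * γ⁻¹ * (m + 1)! * (2 * δ ^ m) := by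
          rw [← mul_sum]
          gcongr
          exact sum_pow_mul_pow_sub_le_two_mul hp.le (by positivity) hpδ m
      _ = _ := by rw [div_eq_mul_inv]; ring
  calc |iteratedDeriv (m + 1) g x| = γ⁻¹ * (γ * |iteratedDeriv (m + 1) g x|) := by
        field_simp
    _ ≤ γ⁻¹ * (2 * C * p / γ * (m + 1)! * δ ^ m) := by gcongr
    _ ≤ γ⁻¹ * (δ * (m + 1)! * δ ^ m) := by gcongr
    _ = _ := by rw [add_zero]; ring

theorem div (hu : ContDiffAt ℝ ∞ u x) (hc : ContDiffAt ℝ ∞ c x)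
    (hcx : c x ≠ 0) (hub : IteratedDerivBound u x P p 0)
    (hcb : IteratedDerivBound (fun y => (c y)⁻¹) x Q q 0) (hp : 0 ≤ p) (hq : 0 ≤ q) (hK : 0 < K)
    (hpK : 2 * p ≤ K) (hqK : q ≤ K) :
    IteratedDerivBound (fun y => u y / c y) x (2 * P * Q) K 0 := by
  simp only [div_eq_mul_inv]
  exact hub.mul hu (hc.inv hcx) (hcb.mono le_rfl hq hqK) hp hK hpK

theorem deriv (h : IteratedDerivBound u x C K m) :
    IteratedDerivBound (deriv u) x (C * K) K (m + 1) := fun k => by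
  rw [← iteratedDeriv_succ']
  convert h (k + 1) using 1
  rw [pow_succ, show k + 1 + m = k + (m + 1) by omega]
  ring

theorem abs_iteratedDeriv_le {A T : ℝ}
    (h : IteratedDerivBound u x (A * T ^ m) K m) (hK : 0 ≤ K) (n : ℕ) :
    |iteratedDeriv n u x| ≤ A * n ! * (2 * K) ^ n * m ! * (2 * T) ^ m := by
  have hfact : ((n + m)! : ℝ) ≤ 2 ^ (n + m) * n ! * m ! := by
    exact_mod_cast Nat.factorial_add_le_two_pow_mul n m
  have := h.nonneg
  calc |iteratedDeriv n u x| ≤ A * T ^ m * K ^ n * (n + m)! := h n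
    _ ≤ A * T ^ m * K ^ n * (2 ^ (n + m) * n ! * m !) := by gcongr
    _ = _ := by ring

end IteratedDerivBound

section uS

variable {b c f : ℝ → ℝ} {x : ℝ}

theorem analyticAt_uS (hb : AnalyticAt ℝ b x) (hc : AnalyticAt ℝ c x) (hf : AnalyticAt ℝ f x)
    (hcx : c x ≠ 0) : ∀ i j, AnalyticAt ℝ (uS b c f i j) x
  | 0, 0 => by rw [uS]; exact hf.div hc hcx
  | i + 1, 0 => by
    rw [uS]; exact (hb.div hc hcx).neg.mul (analyticAt_uS hb hc hf hcx i 0).deriv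
  | 0, _ + 1 => by rw [uS]; exact analyticAt_const
  | 1, _ + 1 => by rw [uS]; exact analyticAt_const
  | i + 2, j + 1 => by
    rw [uS]
    exact (analyticAt_const.div hc hcx).mul ((analyticAt_uS hb hc hf hcx i j).deriv.deriv.sub
      (hb.mul (analyticAt_uS hb hc hf hcx (i + 1) (j + 1)).deriv))

theorem iteratedDerivBound_uS {Cb γb B p D δ A K T : ℝ}
    (hb : AnalyticAt ℝ b x) (hc : AnalyticAt ℝ c x) (hf : AnalyticAt ℝ f x) (hcx : c x ≠ 0)
    (hbb : IteratedDerivBound b x Cb γb 0)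
    (hbc : IteratedDerivBound (fun y => -(b y / c y)) x B p 0)
    (hcinv : IteratedDerivBound (fun y => (c y)⁻¹) x D δ 0)
    (hfc : IteratedDerivBound (fun y => f y / c y) x A K 0)
    (hγb : 0 ≤ γb) (hp : 0 ≤ p) (hδ : 0 ≤ δ) (hK : 0 < K)
    (hγbK : 2 * γb ≤ K) (hpK : 2 * p ≤ K) (hδK : 2 * δ ≤ K)
    (hT₁ : 2 * B * K ≤ T) (hT₂ : 2 * D * (K ^ 2 + 2 * Cb * K * T) ≤ T ^ 2) (i j : ℕ) :
    IteratedDerivBound (uS b c f i j) x (A * T ^ i) K i := by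
  have hu := analyticAt_uS hb hc hf hcx
  have hA := hfc.nonneg
  have hT : 0 ≤ T := le_trans (by have := hbc.nonneg; positivity) hT₁
  induction i using Nat.strong_induction_on generalizing j with
  | _ i ih =>
  rcases j with _ | j
  · rcases i with _ | i
    · rw [uS]; simpa using hfc
    rw [uS]
    refine (hbc.mul (hb.div hc hcx).neg.contDiffAt (hu i 0).deriv.contDiffAt
      (ih i (by omega) 0).deriv hp hK hpK).mono ?_ hK.le le_rfl
    calc 2 * B * (A * T ^ i * K) = A * T ^ i * (2 * B * K) := by ring
      _ ≤ A * T ^ i * T := by gcongr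
      _ = A * T ^ (i + 1) := by ring
  rcases i with _ | _ | i
  · rw [uS]; exact iteratedDerivBound_zero (by positivity) hK.le
  · rw [uS]; exact iteratedDerivBound_zero (by positivity) hK.le
  rw [uS]
  simp only [one_div]
  have hsub := (ih i (by omega) j).deriv.deriv.sub (hu i j).deriv.deriv.contDiffAt
    (hb.mul (hu (i + 1) (j + 1)).deriv).contDiffAt
    (hbb.mul hb.contDiffAt (hu (i + 1) (j + 1)).deriv.contDiffAt
      (ih (i + 1) (by omega) (j + 1)).deriv hγb hK hγbK)
  refine (hcinv.mul (hc.inv hcx).contDiffAt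
    ((hu i j).deriv.deriv.sub (hb.mul (hu (i + 1) (j + 1)).deriv)).contDiffAt
    hsub hδ hK hδK).mono ?_ hK.le le_rfl
  calc 2 * D * (A * T ^ i * K * K + 2 * Cb * (A * T ^ (i + 1) * K))
      = A * T ^ i * (2 * D * (K ^ 2 + 2 * Cb * K * T)) := by ring
    _ ≤ A * T ^ i * T ^ 2 := by gcongr
    _ = A * T ^ (i + 2) := by ring

end uS

theorem stmt_6_general
    (b c f : ℝ → ℝ) (C_b C_c C_f γ_b γ_c γ_f γ : ℝ)
    (hCb : 0 < C_b) (hCc : 0 < C_c) (hCf : 0 < C_f)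
    (hgb : 0 < γ_b) (hgc : 0 < γ_c) (hgf : 0 < γ_f)
    (hγ : 0 < γ)
    (hban : AnalyticOnNhd ℝ b (Set.Icc 0 1))
    (hcan : AnalyticOnNhd ℝ c (Set.Icc 0 1))
    (hfan : AnalyticOnNhd ℝ f (Set.Icc 0 1))
    (hbb : ∀ n : ℕ, ∀ x ∈ Set.Icc (0:ℝ) 1, |iteratedDeriv n b x| ≤ C_b * n.factorial * γ_b ^ n)
    (hcb : ∀ n : ℕ, ∀ x ∈ Set.Icc (0:ℝ) 1, |iteratedDeriv n c x| ≤ C_c * n.factorial * γ_c ^ n)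
    (hfb : ∀ n : ℕ, ∀ x ∈ Set.Icc (0:ℝ) 1, |iteratedDeriv n f x| ≤ C_f * n.factorial * γ_f ^ n)
    (hclow : ∀ x ∈ Set.Icc (0:ℝ) 1, γ ≤ c x)
 :
    ∃ C K₁ K₂ : ℝ, 0 < C ∧ 0 < K₁ ∧ 0 < K₂ ∧
      ∀ n i j : ℕ, ∀ x ∈ Set.Icc (0:ℝ) 1,
        |iteratedDeriv n (uS b c f i j) x| ≤ C * n.factorial * K₁ ^ n * i.factorial * K₂ ^ i := by
  set δ := 2 * γ_c + 2 * C_c * γ_c / γ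
  set p := 2 * γ_b + δ
  set K := 2 * p + 2 * γ_f
  set T := 1 + 2 * γ⁻¹ * K ^ 2 + 4 * C_b * γ⁻¹ * K
  refine ⟨2 * C_f * γ⁻¹, 2 * K, 2 * T, by positivity, by positivity, by positivity,
    fun n i j x hx => ?_⟩
  have hδ : 0 ≤ δ := by positivity
  have hK : 0 < K := by positivity
  have hT₁ : 2 * (2 * C_b * γ⁻¹) * K ≤ T := by
    have : 0 ≤ 2 * γ⁻¹ * K ^ 2 := by positivity
    linarith
  have hT₂ : 2 * γ⁻¹ * (K ^ 2 + 2 * C_b * K * T) ≤ T ^ 2 := by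
    have : 0 ≤ 4 * C_b * γ⁻¹ * K := by positivity
    nlinarith
  have hcx : c x ≠ 0 := (hγ.trans_le (hclow x hx)).ne'
  have hb := IteratedDerivBound.of_factorial_mul_pow (hbb · x hx)
  have hcinv : IteratedDerivBound (fun y => (c y)⁻¹) x γ⁻¹ δ 0 :=
    .inv (hcan x hx).contDiffAt (.of_factorial_mul_pow (hcb · x hx)) hgc hγ
      ((hclow x hx).trans (le_abs_self _))
  have hbc := (hb.div (K := p) (hban x hx).contDiffAt (hcan x hx).contDiffAt hcx hcinv hgb.le
    hδ (by positivity) (by linarith) (by linarith)).neg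
  have hfc := (IteratedDerivBound.of_factorial_mul_pow (hfb · x hx)).div (hfan x hx).contDiffAt
    (hcan x hx).contDiffAt hcx hcinv hgf.le hδ hK (by linarith) (by linarith)
  exact (iteratedDerivBound_uS (hban x hx) (hcan x hx) (hfan x hx) hcx hb hbc hcinv hfc
    hgb.le (by positivity) hδ hK (by linarith) (by linarith) (by linarith) hT₁ hT₂ i j
    ).abs_iteratedDeriv_le hK.le n

theorem stmt_6
    (b c f : ℝ → ℝ) (C_b C_c C_f γ_b γ_c γ_f β γ : ℝ)
    (hCb : 0 < C_b) (hCc : 0 < C_c) (hCf : 0 < C_f)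
    (hgb : 0 < γ_b) (hgc : 0 < γ_c) (hgf : 0 < γ_f)
    (hβ : 0 < β) (hγ : 0 < γ)
    (hban : AnalyticOnNhd ℝ b (Set.Icc 0 1))
    (hcan : AnalyticOnNhd ℝ c (Set.Icc 0 1))
    (hfan : AnalyticOnNhd ℝ f (Set.Icc 0 1))
    (hbb : ∀ n : ℕ, ∀ x ∈ Set.Icc (0:ℝ) 1, |iteratedDeriv n b x| ≤ C_b * n.factorial * γ_b ^ n)
    (hcb : ∀ n : ℕ, ∀ x ∈ Set.Icc (0:ℝ) 1, |iteratedDeriv n c x| ≤ C_c * n.factorial * γ_c ^ n)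
    (hfb : ∀ n : ℕ, ∀ x ∈ Set.Icc (0:ℝ) 1, |iteratedDeriv n f x| ≤ C_f * n.factorial * γ_f ^ n)
    (hblow : ∀ x ∈ Set.Icc (0:ℝ) 1, β ≤ b x)
    (hclow : ∀ x ∈ Set.Icc (0:ℝ) 1, γ ≤ c x)
 :
    ∃ C K₁ K₂ : ℝ, 0 < C ∧ 0 < K₁ ∧ 0 < K₂ ∧
      ∀ n i j : ℕ, ∀ x ∈ Set.Icc (0:ℝ) 1,
        |iteratedDeriv n (uS b c f i j) x| ≤ C * n.factorial * K₁ ^ n * i.factorial * K₂ ^ i :=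
  stmt_6_general b c f C_b C_c C_f γ_b γ_c γ_f γ hCb hCc hCf hgb hgc hgf hγ hban hcan hfan hbb hcb
    hfb hclow
end

section
/- The function v(z) := e^{−λz}(α + ∫₀^z e^{λs} F(s) ds) (the integral taken along the segment from 0 to z) is entire, satisfies v' + λv = F with v(0) = α, and obeys the bound |v(z)| ≤ [C_F γ₁^{si} γ₂^{tj} (i+1) (si+tj+c+|z|)^{si+tj+1} / ((si+tj+1) i^{i}) + |α|] · e^{−Re(λz)} for all z ∈ ℂ. -/
/-!
Multiplying by the integrating factor `e^{λz}` turns `v' + λv = F` into `(e^{λz} v)' = e^{λz} F`,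
so `v` is `e^{-λz}` times `α` plus a primitive of the entire function `e^{λz} F`; integrating
along the segment `[0, z]` gives such a primitive (Morera). The exponentials cancel in
`|e^{λw} F(w)| ≤ K (p + c + |w|)^p` with `p = si + tj`, and integrating this radial bound along the
segment produces the factor `(p + c + |z|)^{p+1} / (p+1)`.
-/

open intervalIntegral

variable {E : Type*} [NormedAddCommGroup E] [NormedSpace ℂ E]

theorem smul_integral_comp_ofReal_mul_eq_sub [CompleteSpace E] {h H : ℂ → E}
    (hH : ∀ w, HasDerivAt H (h w) w) (hh : Continuous h) (z : ℂ) :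
    z • ∫ τ in (0:ℝ)..1, h (τ * z) = H z - H 0 := by
  have hderiv : ∀ τ ∈ Set.uIcc (0:ℝ) 1,
      HasDerivAt (fun τ : ℝ => H (τ * z)) (z • h (τ * z)) τ := fun τ _ => by
    have hline : HasDerivAt (fun τ : ℝ => (τ : ℂ) * z) z τ := by
      simpa using (hasDerivAt_id τ).ofReal_comp.mul_const z
    exact (hH (τ * z)).scomp τ hline
  rw [← integral_smul, integral_eq_sub_of_hasDerivAt hderiv]
  · simp
  · exact (continuous_const.smul (hh.comp (by fun_prop))).intervalIntegrable _ _

theorem Differentiable.hasDerivAt_smul_integral_comp_ofReal_mul [CompleteSpace E] {h : ℂ → E}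
    (hh : Differentiable ℂ h) (z : ℂ) :
    HasDerivAt (fun w : ℂ => w • ∫ τ in (0:ℝ)..1, h (τ * w)) (h z) z := by
  obtain ⟨H, hH⟩ := hh.isExactOn_univ
  have hH' : ∀ w, HasDerivAt H (h w) w := fun w => hH w (Set.mem_univ w)
  rw [funext (smul_integral_comp_ofReal_mul_eq_sub hH' hh.continuous)]
  exact (hH' z).sub_const (H 0)

theorem hasDerivAt_exp_neg_mul_mul_add {l α z : ℂ} {f P : ℂ → ℂ}
    (hP : HasDerivAt P (Complex.exp (l * z) * f z) z) :
    HasDerivAt (fun w => Complex.exp (-(l * w)) * (α + P w))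
      (f z - l * (Complex.exp (-(l * z)) * (α + P z))) z := by
  have hexp : HasDerivAt (fun w => Complex.exp (-(l * w))) (Complex.exp (-(l * z)) * -(l * 1)) z :=
    ((hasDerivAt_id z).const_mul l).neg.cexp
  refine (hexp.mul (hP.const_add α)).congr_deriv ?_
  have hinv : Complex.exp (-(l * z)) * Complex.exp (l * z) = 1 := by
    rw [← Complex.exp_add, neg_add_cancel, Complex.exp_zero]
  linear_combination f z * hinv

theorem mul_integral_rpow_add_mul_le {M r p : ℝ} (hM : 0 ≤ M) (hr : 0 ≤ r) (hp : -1 < p) :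
    r * ∫ τ in (0:ℝ)..1, (M + τ * r) ^ p ≤ (M + r) ^ (p + 1) / (p + 1) := by
  have hp1 : 0 < p + 1 := by linarith
  rcases hr.eq_or_lt with rfl | hr
  · rw [zero_mul]; positivity
  have hint : ∫ τ in (0:ℝ)..1, (M + τ * r) ^ p = r⁻¹ * (((M + r) ^ (p + 1) - M ^ (p + 1)) / (p + 1)) := by
    simp_rw [add_comm M, mul_comm _ r]
    rw [integral_comp_mul_add (fun x : ℝ => x ^ p) hr.ne', integral_rpow (Or.inl hp)]
    simp
  rw [hint, mul_inv_cancel_left₀ hr.ne']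
  gcongr
  linarith [Real.rpow_nonneg hM (p + 1)]

theorem norm_smul_integral_comp_ofReal_mul_le {g : ℂ → E} {K M p : ℝ}
    (hK : 0 ≤ K) (hM : 0 ≤ M) (hp : 0 ≤ p) (hbound : ∀ w, ‖g w‖ ≤ K * (M + ‖w‖) ^ p) (z : ℂ) :
    ‖z • ∫ τ in (0:ℝ)..1, g (τ * z)‖ ≤ K * (M + ‖z‖) ^ (p + 1) / (p + 1) := by
  have hle : ∀ τ ∈ Set.Ioc (0:ℝ) 1, ‖g (τ * z)‖ ≤ K * (M + τ * ‖z‖) ^ p := fun τ hτ => by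
    simpa [norm_mul, abs_of_pos hτ.1] using hbound (τ * z)
  calc ‖z • ∫ τ in (0:ℝ)..1, g (τ * z)‖
      ≤ ‖z‖ * ∫ τ in (0:ℝ)..1, K * (M + τ * ‖z‖) ^ p := by
        rw [norm_smul]
        gcongr
        refine norm_integral_le_of_norm_le zero_le_one (.of_forall hle) ?_
        exact (continuous_const.mul ((by fun_prop : Continuous fun τ : ℝ => M + τ * ‖z‖).rpow_const
          fun _ => Or.inr hp)).intervalIntegrable _ _
    _ = K * (‖z‖ * ∫ τ in (0:ℝ)..1, (M + τ * ‖z‖) ^ p) := by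
        rw [integral_const_mul]; ring
    _ ≤ K * ((M + ‖z‖) ^ (p + 1) / (p + 1)) := by
        gcongr
        exact mul_integral_rpow_add_mul_le hM (norm_nonneg z) (by linarith)
    _ = K * (M + ‖z‖) ^ (p + 1) / (p + 1) := (mul_div_assoc _ _ _).symm

theorem stmt_7_general (l α : ℂ) (γ₁ γ₂ s t c C_F : ℝ) (i j : ℕ)
    (hγ₁ : 0 < γ₁) (hγ₂ : 0 < γ₂) (hs : 0 < s) (ht : 0 < t)
    (hc : 0 < c) (hCF : 0 < C_F)
    (F : ℂ → ℂ) (hF : Differentiable ℂ F)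
    (hFb : ∀ z : ℂ, ‖F z‖ ≤
      C_F * γ₁ ^ (s * (i:ℝ)) * γ₂ ^ (t * (j:ℝ)) * Real.exp (-(l * z).re) * ((i:ℝ) + 1) *
        (s * (i:ℝ) + t * (j:ℝ) + c + ‖z‖) ^ (s * (i:ℝ) + t * (j:ℝ)) / (i:ℝ) ^ i) :
    let v : ℂ → ℂ := fun z => Complex.exp (-(l * z)) *
      (α + z * ∫ τ in (0:ℝ)..1, Complex.exp (l * ((τ:ℂ) * z)) * F ((τ:ℂ) * z))
    Differentiable ℂ v ∧ v 0 = α ∧ (∀ z : ℂ, deriv v z + l * v z = F z) ∧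
      ∀ z : ℂ, ‖v z‖ ≤
        (C_F * γ₁ ^ (s * (i:ℝ)) * γ₂ ^ (t * (j:ℝ)) * ((i:ℝ) + 1) *
            (s * (i:ℝ) + t * (j:ℝ) + c + ‖z‖) ^ (s * (i:ℝ) + t * (j:ℝ) + 1) /
            ((s * (i:ℝ) + t * (j:ℝ) + 1) * (i:ℝ) ^ i) + ‖α‖) *
          Real.exp (-(l * z).re) := by
  intro v
  set p : ℝ := s * i + t * j
  set K : ℝ := C_F * γ₁ ^ (s * (i:ℝ)) * γ₂ ^ (t * (j:ℝ)) * ((i:ℝ) + 1) / (i:ℝ) ^ i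
  have hg : Differentiable ℂ fun w => Complex.exp (l * w) * F w := by fun_prop
  have hv : ∀ z, HasDerivAt v (F z - l * v z) z := fun z =>
    hasDerivAt_exp_neg_mul_mul_add (hg.hasDerivAt_smul_integral_comp_ofReal_mul z)
  refine ⟨fun z => (hv z).differentiableAt, by simp [v], fun z => by rw [(hv z).deriv]; ring,
    fun z => ?_⟩
  have hgb : ∀ w, ‖Complex.exp (l * w) * F w‖ ≤ K * (p + c + ‖w‖) ^ p := fun w => by
    rw [norm_mul, Complex.norm_exp]
    calc Real.exp (l * w).re * ‖F w‖
        ≤ Real.exp (l * w).re * (C_F * γ₁ ^ (s * (i:ℝ)) * γ₂ ^ (t * (j:ℝ)) *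
            Real.exp (-(l * w).re) * ((i:ℝ) + 1) * (p + c + ‖w‖) ^ p / (i:ℝ) ^ i) := by
          gcongr; exact hFb w
      _ = K * (p + c + ‖w‖) ^ p := by
          simp only [K]; rw [Real.exp_neg]; field_simp
  have hint := norm_smul_integral_comp_ofReal_mul_le (by positivity) (by positivity)
    (by positivity) hgb z
  calc ‖v z‖ = Real.exp (-(l * z).re) *
        ‖α + z * ∫ τ in (0:ℝ)..1, Complex.exp (l * ((τ:ℂ) * z)) * F ((τ:ℂ) * z)‖ := by
        simp only [v, norm_mul, Complex.norm_exp, Complex.neg_re]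
    _ ≤ Real.exp (-(l * z).re) * (‖α‖ + K * (p + c + ‖z‖) ^ (p + 1) / (p + 1)) := by
        gcongr
        exact (norm_add_le _ _).trans (by gcongr; exact hint)
    _ = _ := by simp only [K, div_eq_mul_inv, mul_inv]; ring

theorem stmt_7 (l α : ℂ) (γ₁ γ₂ s t c C_F : ℝ) (i j : ℕ)
    (hl : 0 < l.re) (hγ₁ : 0 < γ₁) (hγ₂ : 0 < γ₂) (hs : 0 < s) (ht : 0 < t)
    (hc : 0 < c) (hCF : 0 < C_F)
    (F : ℂ → ℂ) (hF : Differentiable ℂ F)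
    (hFb : ∀ z : ℂ, ‖F z‖ ≤
      C_F * γ₁ ^ (s * (i:ℝ)) * γ₂ ^ (t * (j:ℝ)) * Real.exp (-(l * z).re) * ((i:ℝ) + 1) *
        (s * (i:ℝ) + t * (j:ℝ) + c + ‖z‖) ^ (s * (i:ℝ) + t * (j:ℝ)) / (i:ℝ) ^ i) :
    let v : ℂ → ℂ := fun z => Complex.exp (-(l * z)) *
      (α + z * ∫ τ in (0:ℝ)..1, Complex.exp (l * ((τ:ℂ) * z)) * F ((τ:ℂ) * z))
    Differentiable ℂ v ∧ v 0 = α ∧ (∀ z : ℂ, deriv v z + l * v z = F z) ∧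
      ∀ z : ℂ, ‖v z‖ ≤
        (C_F * γ₁ ^ (s * (i:ℝ)) * γ₂ ^ (t * (j:ℝ)) * ((i:ℝ) + 1) *
            (s * (i:ℝ) + t * (j:ℝ) + c + ‖z‖) ^ (s * (i:ℝ) + t * (j:ℝ) + 1) /
            ((s * (i:ℝ) + t * (j:ℝ) + 1) * (i:ℝ) ^ i) + ‖α‖) *
          Real.exp (-(l * z).re) :=
  stmt_7_general l α γ₁ γ₂ s t c C_F i j hγ₁ hγ₂ hs ht hc hCF F hF hFb
end
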